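/- arXiv:2204.01581 — 9 statements merged into one kernel-verified Lean document; each statement's English description precedes it below -/
import Mathlib

section
/- For every N ∈ ℕ and every n ∈ ℕ, the incomplete von Mangoldt function admits the finite Ramanujan expansion Λ_N(n) = ∑_{q ≤ N} Λ̂_N(q) c_q(n), where Λ̂_N(q) = −(μ(q)/q) ∑_{d ≤ N/q, gcd(d,q)=1} μ(d) log(dq)/d. -/
/-!
Put `t = q d`. Since `μ (q d) = μ q μ d` for coprime `q, d` and `μ (q d) = 0` otherwise, the
right-hand side is `-∑_{t ≤ N} (μ t log t / t) ∑_{q ∣ t} c_q(n)`. Sorting the fractions `a / t`,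
`1 ≤ a ≤ t`, by their reduced denominator `q ∣ t` gives `∑_{q ∣ t} c_q(n) = ∑_{a ≤ t} e(a n / t)`,
a full sum of `t`-th roots of unity, which is `t` if `t ∣ n` and `0` otherwise.
-/

open Finset

/-- The Ramanujan sum `c_q(n) = ∑_{1 ≤ j ≤ q, gcd(j,q)=1} exp(2πi j n / q)`. -/
noncomputable def cq (q : ℕ) (n : ℤ) : ℂ :=
  ∑ j ∈ (Finset.Icc 1 q).filter (fun j => Nat.Coprime j q),
    Complex.exp (2 * Real.pi * Complex.I * j * n / q)

/-- The incomplete von Mangoldt function `Λ_N(n) = -∑_{d ≤ N, d ∣ n} μ(d) log d`. -/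
noncomputable def LamN (N n : ℕ) : ℝ :=
  -∑ d ∈ (Finset.Icc 1 N).filter (fun d => d ∣ n),
    (ArithmeticFunction.moebius d : ℝ) * Real.log d

/-- The correlation `C_{Λ,Λ_N}(N, n) = ∑_{m ≤ N} Λ(m) Λ_N(m + n)`. -/
noncomputable def corr (N n : ℕ) : ℝ :=
  ∑ m ∈ Finset.Icc 1 N, ArithmeticFunction.vonMangoldt m * LamN N (m + n)

/-- The Ramanujan coefficient `Λ̂_N(q) = -(μ(q)/q) ∑_{d ≤ N/q, gcd(d,q)=1} μ(d) log(dq)/d`. -/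
noncomputable def LamHat (N q : ℕ) : ℝ :=
  -((ArithmeticFunction.moebius q : ℝ) / q) *
    ∑ d ∈ (Finset.Icc 1 (N / q)).filter (fun d => Nat.Coprime d q),
      (ArithmeticFunction.moebius d : ℝ) * Real.log (d * q) / d

/-- `ℤ_q^* = {m ∈ ℕ ∩ [1,q] : gcd(m,q) = 1}`. -/
def Zstar (q : ℕ) : Finset ℕ := (Finset.Icc 1 q).filter (fun m => Nat.Coprime m q)

/-- `ψ(N; q, k) = ∑_{n ≤ N, n ≡ k (mod q)} Λ(n)`. -/
noncomputable def psi (N q k : ℕ) : ℝ :=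
  ∑ n ∈ (Finset.Icc 1 N).filter (fun n => n % q = k % q),
    ArithmeticFunction.vonMangoldt n

/-- `δ(h; q, k) = c_q(k+h) - (μ(q)/φ(q)) c_q(h)`. -/
noncomputable def dev (h q k : ℕ) : ℂ :=
  cq q ((k : ℤ) + h) - (ArithmeticFunction.moebius q : ℂ) / (Nat.totient q : ℂ) * cq q h

/-- `Δ(N, h) = ∑_{q ≤ N} Λ̂_N(q) ∑_{k ∈ ℤ_q^*} ψ(N;q,k) δ(h;q,k)`. -/
noncomputable def Delta (N h : ℕ) : ℂ :=
  ∑ q ∈ Finset.Icc 1 N, (LamHat N q : ℂ) *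
    ∑ k ∈ Zstar q, (psi N q k : ℂ) * dev h q k

/-- `S_N(q, k; r) = ∑_{n ≤ N, n ≡ k (mod q)} c_r(n)`. -/
noncomputable def SN (N q : ℕ) (k : ℤ) (r : ℕ) : ℂ :=
  ∑ n ∈ (Finset.Icc 1 N).filter (fun n : ℕ => (n : ℤ) % (q : ℤ) = k % (q : ℤ)), cq r n

open ArithmeticFunction
open scoped ArithmeticFunction.Moebius

lemma sum_Icc_exp_two_pi_I_mul_div (t : ℕ) (n : ℤ) :
    ∑ a ∈ Icc 1 t, Complex.exp (2 * Real.pi * Complex.I * a * n / t)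
      = if (t : ℤ) ∣ n then (t : ℂ) else 0 := by
  rcases eq_or_ne t 0 with rfl | ht
  · simp
  have hζ := Complex.isPrimitiveRoot_exp t ht
  set r := Complex.exp (2 * Real.pi * Complex.I / t) ^ n
  have hpow (a : ℕ) : Complex.exp (2 * Real.pi * Complex.I * a * n / t) = r ^ a := by
    rw [← zpow_natCast, ← zpow_mul, ← Complex.exp_int_mul]
    push_cast
    ring_nf
  have hrt : r ^ t = 1 := by
    rw [← zpow_natCast, ← zpow_mul, mul_comm n, zpow_mul, zpow_natCast, hζ.pow_eq_one, one_zpow]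
  have hIcc : ∑ a ∈ Icc 1 t, r ^ a = r * ∑ a ∈ range t, r ^ a := by
    rw [mul_sum, ← Ico_add_one_right_eq_Icc, sum_Ico_eq_sum_range, add_tsub_cancel_right]
    simp only [pow_succ', add_comm 1]
  simp only [hpow, hIcc]
  split_ifs with hdvd
  · simp [r, (hζ.zpow_eq_one_iff_dvd n).mpr hdvd]
  · rw [geom_sum_eq (mt (hζ.zpow_eq_one_iff_dvd n).mp hdvd), hrt, sub_self, zero_div, mul_zero]

lemma sum_Icc_div_eq_sum_divisors_sum_coprime {M : Type*} [AddCommMonoid M] (t : ℕ)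
    (f : ℚ → M) :
    ∑ a ∈ Icc 1 t, f (a / t) = ∑ q ∈ t.divisors, ∑ j ∈ Icc 1 q with j.Coprime q, f (j / q) := by
  rcases eq_or_ne t 0 with rfl | ht
  · simp
  rw [sum_sigma']
  symm
  -- `a ↦ (t / gcd a t, a / gcd a t)` writes `a / t` in lowest terms.
  refine sum_nbij' (fun p => p.2 * (t / p.1)) (fun a => ⟨t / a.gcd t, a / a.gcd t⟩)
    ?_ ?_ ?_ ?_ ?_
  · rintro ⟨q, j⟩ hp
    simp only [mem_sigma, Nat.mem_divisors, mem_filter, mem_Icc] at hp ⊢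
    obtain ⟨⟨⟨d, rfl⟩, hqd⟩, ⟨hj1, hjq⟩, -⟩ := hp
    obtain ⟨hq, hd⟩ := mul_ne_zero_iff.mp hqd
    rw [Nat.mul_div_cancel_left d (Nat.pos_of_ne_zero hq)]
    exact ⟨Nat.mul_pos hj1 (Nat.pos_of_ne_zero hd), Nat.mul_le_mul_right d hjq⟩
  · intro a ha
    simp only [mem_Icc] at ha
    have hg : 0 < a.gcd t := Nat.gcd_pos_of_pos_left t ha.1
    simp only [mem_sigma, Nat.mem_divisors, mem_filter, mem_Icc]
    exact ⟨⟨Nat.div_dvd_of_dvd (Nat.gcd_dvd_right a t), ht⟩,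
      ⟨Nat.div_pos (Nat.gcd_le_left t ha.1) hg, Nat.div_le_div_right ha.2⟩,
      Nat.coprime_div_gcd_div_gcd hg⟩
  · rintro ⟨q, j⟩ hp
    simp only [mem_sigma, Nat.mem_divisors, mem_filter, mem_Icc] at hp
    obtain ⟨⟨⟨d, rfl⟩, hqd⟩, -, hjq⟩ := hp
    obtain ⟨hq, hd⟩ := mul_ne_zero_iff.mp hqd
    simp only [Nat.mul_div_cancel_left d (Nat.pos_of_ne_zero hq), Nat.gcd_mul_right, hjq,
      one_mul, Nat.mul_div_cancel _ (Nat.pos_of_ne_zero hd)]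
  · intro a ha
    simp only [Nat.div_div_self (Nat.gcd_dvd_right a t) ht]
    exact Nat.div_mul_cancel (Nat.gcd_dvd_left a t)
  · rintro ⟨q, j⟩ hp
    simp only [mem_sigma, Nat.mem_divisors, mem_filter, mem_Icc] at hp
    obtain ⟨⟨⟨d, rfl⟩, hqd⟩, -⟩ := hp
    obtain ⟨hq, hd⟩ := mul_ne_zero_iff.mp hqd
    rw [Nat.mul_div_cancel_left d (Nat.pos_of_ne_zero hq)]
    congr 1
    push_cast
    field_simp

lemma sum_divisors_cq (t : ℕ) (n : ℤ) :
    ∑ q ∈ t.divisors, cq q n = if (t : ℤ) ∣ n then (t : ℂ) else 0 := by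
  let e : ℚ → ℂ := fun x => Complex.exp (2 * Real.pi * Complex.I * x * n)
  calc ∑ q ∈ t.divisors, cq q n
      = ∑ q ∈ t.divisors, ∑ j ∈ Icc 1 q with j.Coprime q, e (j / q) := by
        refine sum_congr rfl fun q _ => sum_congr rfl fun j _ => ?_
        simp only [e]
        push_cast
        ring_nf
    _ = ∑ a ∈ Icc 1 t, e (a / t) := (sum_Icc_div_eq_sum_divisors_sum_coprime t e).symm
    _ = _ := by
        rw [← sum_Icc_exp_two_pi_I_mul_div t n]
        refine sum_congr rfl fun a _ => ?_
        simp only [e]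
        push_cast
        ring_nf

lemma moebius_mul_of_not_coprime {m n : ℕ} (h : ¬m.Coprime n) : μ (m * n) = 0 :=
  moebius_eq_zero_of_not_squarefree fun hsq => h (Nat.squarefree_mul_iff.mp hsq).1

lemma LamHat_eq_neg_sum (N q : ℕ) :
    LamHat N q = -∑ d ∈ Icc 1 (N / q), (μ (q * d) : ℝ) * Real.log ↑(q * d) / ↑(q * d) := by
  rw [LamHat, neg_mul, sum_filter, mul_sum]
  refine congrArg _ (sum_congr rfl fun d _ => ?_)
  by_cases h : d.Coprime q
  · rw [if_pos h, isMultiplicative_moebius.map_mul_of_coprime h.symm]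
    push_cast
    rw [mul_comm (d : ℝ)]
    ring
  · rw [if_neg h, moebius_mul_of_not_coprime (mt Nat.Coprime.symm h)]
    simp

lemma sum_Icc_sum_Icc_div_eq_sum_sum_divisors {M : Type*} [AddCommMonoid M] (N : ℕ)
    (f : ℕ → ℕ → M) :
    ∑ q ∈ Icc 1 N, ∑ d ∈ Icc 1 (N / q), f q d = ∑ t ∈ Icc 1 N, ∑ q ∈ t.divisors, f q (t / q) := by
  rw [sum_sigma', sum_sigma']
  refine sum_nbij' (fun p => ⟨p.1 * p.2, p.1⟩) (fun p => ⟨p.2, p.1 / p.2⟩) ?_ ?_ ?_ ?_ ?_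
  · rintro ⟨q, d⟩ hp
    simp only [mem_sigma, Nat.mem_divisors, mem_Icc] at hp ⊢
    obtain ⟨⟨hq, -⟩, hd, hdN⟩ := hp
    have hqd : q * d ≤ N := mul_comm q d ▸ (Nat.le_div_iff_mul_le hq).mp hdN
    exact ⟨⟨Nat.mul_pos hq hd, hqd⟩, dvd_mul_right q d, (Nat.mul_pos hq hd).ne'⟩
  · rintro ⟨t, q⟩ hp
    simp only [mem_sigma, Nat.mem_divisors, mem_Icc] at hp ⊢
    obtain ⟨⟨ht, htN⟩, hqt, -⟩ := hp
    have hq : 0 < q := Nat.pos_of_dvd_of_pos hqt ht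
    exact ⟨⟨hq, (Nat.le_of_dvd ht hqt).trans htN⟩,
      Nat.div_pos (Nat.le_of_dvd ht hqt) hq, Nat.div_le_div_right htN⟩
  · rintro ⟨q, d⟩ hp
    simp only [mem_sigma, mem_Icc] at hp
    simp only [Nat.mul_div_cancel_left d hp.1.1]
  · rintro ⟨t, q⟩ hp
    simp only [mem_sigma, Nat.mem_divisors] at hp
    simp only [Nat.mul_div_cancel' hp.2.1]
  · rintro ⟨q, d⟩ hp
    simp only [mem_sigma, mem_Icc] at hp
    simp only [Nat.mul_div_cancel_left d hp.1.1]

theorem stmt1_general (N n : ℕ) :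
    (LamN N n : ℂ) = ∑ q ∈ Finset.Icc 1 N, (LamHat N q : ℂ) * cq q (n : ℤ) := by
  let w : ℕ → ℂ := fun t => ((μ t : ℝ) * Real.log t / t : ℝ)
  calc (LamN N n : ℂ) = ∑ t ∈ Icc 1 N, -w t * if (t : ℤ) ∣ n then (t : ℂ) else 0 := by
        rw [LamN, sum_filter, Complex.ofReal_neg, Complex.ofReal_sum, ← sum_neg_distrib]
        refine sum_congr rfl fun t ht => ?_
        have ht0 : (t : ℂ) ≠ 0 := by
          exact_mod_cast Nat.one_le_iff_ne_zero.mp (mem_Icc.mp ht).1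
        simp only [w, Int.natCast_dvd_natCast]
        split_ifs
        · push_cast
          field_simp
        · simp
    _ = ∑ t ∈ Icc 1 N, ∑ q ∈ t.divisors, -w (q * (t / q)) * cq q n := by
        refine sum_congr rfl fun t _ => ?_
        rw [← sum_divisors_cq, mul_sum]
        refine sum_congr rfl fun q hq => ?_
        rw [Nat.mul_div_cancel' (Nat.dvd_of_mem_divisors hq)]
    _ = ∑ q ∈ Icc 1 N, (LamHat N q : ℂ) * cq q n := by
        rw [← sum_Icc_sum_Icc_div_eq_sum_sum_divisors N (fun q d => -w (q * d) * cq q n)]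
        refine sum_congr rfl fun q _ => ?_
        simp only [w, LamHat_eq_neg_sum, ← sum_neg_distrib, Complex.ofReal_sum,
          Complex.ofReal_neg, sum_mul]

/-- the finite Ramanujan expansion of the incomplete von Mangoldt function. -/
theorem stmt1 (N n : ℕ) (hN : 1 ≤ N) (hn : 1 ≤ n) :
    (LamN N n : ℂ) = ∑ q ∈ Finset.Icc 1 N, (LamHat N q : ℂ) * cq q (n : ℤ) :=
  stmt1_general N n
end

section
/- There is an absolute constant K such that for every N ∈ ℕ with N ≥ 2 and every q ∈ ℕ with q ≤ N one has |Λ̂_N(q)| ≤ K (log N)² / q, where Λ̂_N(q) = −(μ(q)/q) ∑_{d ≤ N/q, gcd(d,q)=1} μ(d) log(dq)/d. -/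
open Finset

/-- `Λ̂_N(q) ≪ (log N)² / q` uniformly for `q ≤ N`. -/
theorem stmt2 : ∃ K : ℝ, ∀ N q : ℕ, 2 ≤ N → 1 ≤ q → q ≤ N →
    |LamHat N q| ≤ K * (Real.log N) ^ 2 / q := by
  use 3
  intro N q hN hq hqN
  have hq0 : (0:ℝ) < q := by positivity
  have hqpos : 0 < q := hq
  have hN2 : (2:ℝ) ≤ N := by exact_mod_cast hN
  have hlog2 : (1/2 : ℝ) ≤ Real.log N := by
    have := Real.log_two_gt_d9
    have h2 : Real.log 2 ≤ Real.log N := Real.log_le_log (by norm_num) hN2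
    linarith
  have hlogN0 : (0:ℝ) ≤ Real.log N := by linarith
  set M := N / q with hM
  set F := (Finset.Icc 1 M).filter (fun d => Nat.Coprime d q) with hF
  have hterm : ∀ d ∈ F, |(ArithmeticFunction.moebius d : ℝ) * Real.log (d * q) / d|
      ≤ Real.log N / d := by
    intro d hd
    rw [hF, Finset.mem_filter, Finset.mem_Icc] at hd
    obtain ⟨⟨hd1, hdM⟩, -⟩ := hd
    have hd0 : (0:ℝ) < d := by exact_mod_cast hd1
    have hdqN : (d * q : ℕ) ≤ N := (Nat.le_div_iff_mul_le hqpos).mp hdM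
    have hlogdq : Real.log ((d:ℝ) * q) ≤ Real.log N := by
      apply Real.log_le_log (by positivity)
      exact_mod_cast hdqN
    have hlogdq0 : (0:ℝ) ≤ Real.log ((d:ℝ) * q) := by
      apply Real.log_nonneg
      have : (1:ℝ) ≤ d := by exact_mod_cast hd1
      have : (1:ℝ) ≤ q := by exact_mod_cast hq
      nlinarith
    rw [abs_div, abs_mul, Nat.abs_cast]
    have hmu : |(ArithmeticFunction.moebius d : ℝ)| ≤ 1 := by
      have := ArithmeticFunction.abs_moebius_le_one (n := d)
      exact_mod_cast this
    rw [abs_of_nonneg hlogdq0]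
    gcongr
    calc |(ArithmeticFunction.moebius d : ℝ)| * Real.log ((d:ℝ) * q)
        ≤ 1 * Real.log N := mul_le_mul hmu hlogdq hlogdq0 (by norm_num)
      _ = Real.log N := one_mul _
  have hsum : |∑ d ∈ F, (ArithmeticFunction.moebius d : ℝ) * Real.log (d * q) / d|
      ≤ Real.log N * (1 + Real.log N) := by
    calc |∑ d ∈ F, (ArithmeticFunction.moebius d : ℝ) * Real.log (d * q) / d|
        ≤ ∑ d ∈ F, |(ArithmeticFunction.moebius d : ℝ) * Real.log (d * q) / d| :=
          Finset.abs_sum_le_sum_abs _ _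
      _ ≤ ∑ d ∈ F, Real.log N / d := Finset.sum_le_sum hterm
      _ ≤ ∑ d ∈ Finset.Icc 1 M, Real.log N / d := by
          apply Finset.sum_le_sum_of_subset_of_nonneg (Finset.filter_subset _ _)
          intro d hd _
          positivity
      _ = Real.log N * ∑ d ∈ Finset.Icc 1 M, ((d:ℝ))⁻¹ := by
          rw [Finset.mul_sum]; simp [div_eq_mul_inv]
      _ = Real.log N * (harmonic M : ℝ) := by
          rw [harmonic_eq_sum_Icc]; push_cast; ring
      _ ≤ Real.log N * (1 + Real.log M) := by
          apply mul_le_mul_of_nonneg_left (harmonic_le_one_add_log M) hlogN0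
      _ ≤ Real.log N * (1 + Real.log N) := by
          have hM1 : 1 ≤ M := (Nat.one_le_div_iff hqpos).mpr hqN
          have : Real.log M ≤ Real.log N := by
            apply Real.log_le_log (by exact_mod_cast hM1)
            exact_mod_cast Nat.div_le_self N q
          nlinarith
  have habs : |LamHat N q| ≤ (1 / q) * (Real.log N * (1 + Real.log N)) := by
    rw [LamHat, abs_mul, abs_neg, abs_div, Nat.abs_cast]
    have hmuq : |(ArithmeticFunction.moebius q : ℝ)| ≤ 1 := by
      have := ArithmeticFunction.abs_moebius_le_one (n := q)
      exact_mod_cast this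
    exact mul_le_mul (by gcongr) hsum (abs_nonneg _) (by positivity)
  refine habs.trans ?_
  rw [div_mul_eq_mul_div, one_mul, div_le_div_iff₀ hq0 hq0]
  have h3 : 1 + Real.log N ≤ 3 * Real.log N := by linarith
  nlinarith [mul_le_mul_of_nonneg_left (mul_le_mul_of_nonneg_right h3 hq0.le) hlogN0]
end

section
/- For all r, q ∈ ℕ and all n ∈ ℤ, the limit lim_{x→∞} (1/x) ∑_{h ≤ x} c_r(h+n) c_q(h) exists and equals c_q(n) if r = q, and equals 0 if r ≠ q. -/
open Finset

/-!
Expanding both Ramanujan sums writes `c_r(h + n) c_q(h)` as a finite combination of sequences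
`h ↦ ζ ^ h` with `ζ = e(j/r + j'/q) = e((jq + j'r)/(rq))` a root of unity, whose Cesàro means tend
to `1` if `ζ = 1` and to `0` otherwise. For `j`, `j'` coprime to `r`, `q`, the condition
`rq ∣ jq + j'r` forces `r = q` and `j' ≡ -j (mod r)`, which singles out exactly one `j'` for each
`j`; the surviving coefficients `e(jn/r)` add up to `c_q(n)`.
-/

open Filter Topology Complex
open scoped Real

lemma norm_sum_Icc_pow_le {c : ℂ} (hc : ‖c‖ ≤ 1) (hc1 : c ≠ 1) (N : ℕ) :
    ‖∑ h ∈ Icc 1 N, c ^ h‖ ≤ 2 / ‖c - 1‖ := by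
  rw [← Ico_add_one_right_eq_Icc, geom_sum_Ico hc1 (by omega), norm_div]
  gcongr
  calc ‖c ^ (N + 1) - c ^ 1‖ ≤ ‖c ^ (N + 1)‖ + ‖c ^ 1‖ := norm_sub_le _ _
    _ ≤ 1 + 1 := by gcongr <;> exact norm_pow c _ ▸ pow_le_one₀ (norm_nonneg c) hc
    _ = 2 := by norm_num

noncomputable def cesaroMean (f : ℕ → ℂ) (x : ℝ) : ℂ :=
  1 / x * ∑ h ∈ Icc 1 ⌊x⌋₊, f h

lemma cesaroMean_const_mul (a : ℂ) (f : ℕ → ℂ) :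
    cesaroMean (fun h => a * f h) = fun x => a * cesaroMean f x := by
  ext x
  simp only [cesaroMean, ← mul_sum]
  ring

lemma cesaroMean_sum {ι : Type*} (s : Finset ι) (f : ι → ℕ → ℂ) :
    cesaroMean (fun h => ∑ i ∈ s, f i h) = fun x => ∑ i ∈ s, cesaroMean (f i) x := by
  ext x
  simp only [cesaroMean, sum_comm (s := Icc 1 ⌊x⌋₊), mul_sum]

lemma tendsto_cesaroMean_pow {c : ℂ} (hc : ‖c‖ ≤ 1) :
    Tendsto (cesaroMean (c ^ ·)) atTop (𝓝 (if c = 1 then 1 else 0)) := by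
  split_ifs with hc1
  · subst hc1
    have h := (continuous_ofReal.tendsto 1).comp (tendsto_nat_floor_div_atTop (R := ℝ))
    refine (ofReal_one ▸ h).congr fun x => ?_
    simp [cesaroMean, div_eq_inv_mul]
  · have hx : Tendsto (fun x : ℝ => 1 / (x : ℂ)) atTop (𝓝 0) := by
      simpa [Function.comp_def] using (continuous_ofReal.tendsto 0).comp tendsto_inv_atTop_zero
    exact hx.zero_mul_isBoundedUnder_le
      ⟨2 / ‖c - 1‖, eventually_map.mpr (Eventually.of_forall fun x => norm_sum_Icc_pow_le hc hc1 _)⟩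

lemma tendsto_cesaroMean_exp_pow {N : ℕ} (hN : N ≠ 0) (k : ℕ) :
    Tendsto (cesaroMean (exp (2 * π * I * k / N) ^ ·)) atTop
      (𝓝 (if N ∣ k then 1 else 0)) := by
  have hnorm : ‖exp (2 * π * I * k / N)‖ ≤ 1 := by simp [norm_exp]
  simpa only [exp_two_pi_mul_I_mul_div_eq_one_iff hN] using tendsto_cesaroMean_pow hnorm

lemma mem_Zstar {q j : ℕ} : j ∈ Zstar q ↔ (1 ≤ j ∧ j ≤ q) ∧ j.Coprime q := by
  simp [Zstar]

lemma pos_of_mem_Zstar {q j : ℕ} (hj : j ∈ Zstar q) : 0 < q := by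
  have := (mem_Zstar.mp hj).1
  omega

lemma cq_add_mul_cq (r q : ℕ) (n : ℤ) (h : ℕ) :
    cq r (h + n) * cq q h = ∑ j ∈ Zstar r, ∑ j' ∈ Zstar q,
      exp (2 * π * I * j * n / r) * exp (2 * π * I * (j * q + j' * r : ℕ) / (r * q : ℕ)) ^ h := by
  rw [cq, cq, sum_mul_sum]
  refine sum_congr rfl fun j hj => sum_congr rfl fun j' hj' => ?_
  have hr : (r : ℂ) ≠ 0 := Nat.cast_ne_zero.mpr (pos_of_mem_Zstar hj).ne'
  have hq : (q : ℂ) ≠ 0 := Nat.cast_ne_zero.mpr (pos_of_mem_Zstar hj').ne'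
  rw [← exp_nat_mul, ← exp_add, ← exp_add]
  congr 1
  push_cast
  field_simp
  ring

lemma eq_of_mul_dvd_add_mul {r q j j' : ℕ} (hj : j.Coprime r) (hj' : j'.Coprime q)
    (h : r * q ∣ j * q + j' * r) : r = q := by
  have hr : r ∣ j * q :=
    (Nat.dvd_add_left (dvd_mul_left r j')).mp ((dvd_mul_right r q).trans h)
  have hq : q ∣ j' * r :=
    (Nat.dvd_add_right (dvd_mul_left q j)).mp ((dvd_mul_left q r).trans h)
  exact Nat.dvd_antisymm (hj.symm.dvd_of_dvd_mul_left hr) (hj'.symm.dvd_of_dvd_mul_left hq)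

lemma card_filter_dvd_add_Zstar {r j : ℕ} (hr : 0 < r) (hj : j.Coprime r) :
    #{j' ∈ Zstar r | r ∣ j + j'} = 1 := by
  have hmod := Nat.mod_lt j hr
  have hdiv := Nat.div_add_mod j r
  -- `r - j % r` is the representative of `-j` modulo `r` lying in `[1, r]`.
  refine card_eq_one.mpr ⟨r - j % r, ext fun j' => ?_⟩
  simp only [mem_filter, mem_Zstar, mem_singleton]
  constructor
  · rintro ⟨⟨⟨h1, h2⟩, -⟩, hd⟩
    have hd' : r ∣ j % r + j' :=
      (Nat.dvd_add_right (dvd_mul_right r (j / r))).mp (by rwa [← add_assoc, hdiv])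
    have := Nat.eq_of_dvd_of_lt_two_mul (by omega) hd' (by omega)
    omega
  · rintro rfl
    have hcop : (j % r).Coprime r := by
      rw [Nat.Coprime, ← Nat.gcd_rec]
      exact hj.symm
    refine ⟨⟨⟨by omega, by omega⟩, (Nat.coprime_self_sub_left hmod.le).mpr hcop⟩,
      ⟨j / r + 1, by rw [mul_add]; omega⟩⟩

lemma sum_Zstar_mul_ite_dvd (r q : ℕ) (n : ℤ) :
    ∑ j ∈ Zstar r, ∑ j' ∈ Zstar q,
        exp (2 * π * I * j * n / r) * (if r * q ∣ j * q + j' * r then 1 else 0) =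
      if r = q then cq q n else 0 := by
  split_ifs with hrq
  · subst hrq
    refine sum_congr rfl fun j hj => ?_
    have hr := pos_of_mem_Zstar hj
    simp only [← mul_sum, ← add_mul, Nat.mul_dvd_mul_iff_right hr, sum_boole,
      card_filter_dvd_add_Zstar hr (mem_Zstar.mp hj).2, Nat.cast_one, mul_one]
  · refine sum_eq_zero fun j hj => sum_eq_zero fun j' hj' => ?_
    rw [if_neg fun h => hrq (eq_of_mul_dvd_add_mul (mem_Zstar.mp hj).2 (mem_Zstar.mp hj').2 h),
      mul_zero]

theorem stmt5_general (r q : ℕ) (n : ℤ) :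
    Filter.Tendsto
      (fun x : ℝ => (1 / x) * ∑ h ∈ Finset.Icc 1 ⌊x⌋₊, cq r ((h : ℤ) + n) * cq q (h : ℤ))
      Filter.atTop (nhds (if r = q then cq q n else 0)) := by
  change Tendsto (cesaroMean fun h => cq r (h + n) * cq q h) _ _
  rw [funext (cq_add_mul_cq r q n), ← sum_Zstar_mul_ite_dvd, cesaroMean_sum]
  refine tendsto_finsetSum _ fun j hj => ?_
  rw [cesaroMean_sum]
  refine tendsto_finsetSum _ fun j' hj' => ?_
  rw [cesaroMean_const_mul]
  have hrq := Nat.mul_ne_zero (pos_of_mem_Zstar hj).ne' (pos_of_mem_Zstar hj').ne'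
  exact (tendsto_cesaroMean_exp_pow hrq _).const_mul _

/-- orthogonality of Ramanujan sums:
`lim_{x→∞} (1/x) ∑_{h ≤ x} c_r(h+n) c_q(h)` equals `c_q(n)` if `r = q`, else `0`. -/
theorem stmt5 (r q : ℕ) (hr : 1 ≤ r) (hq : 1 ≤ q) (n : ℤ) :
    Filter.Tendsto
      (fun x : ℝ => (1 / x) * ∑ h ∈ Finset.Icc 1 ⌊x⌋₊, cq r ((h : ℤ) + n) * cq q (h : ℤ))
      Filter.atTop (nhds (if r = q then cq q n else 0)) :=
  stmt5_general r q n
end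

section
/- There is an absolute constant K such that for all N, h ∈ ℕ with N ≥ 2, the correlation C_{Λ,Λ}(N,h) = ∑_{n ≤ N} Λ(n) Λ(n+h) satisfies |C_{Λ,Λ}(N,h) − C_{Λ,Λ_N}(N,h)| ≤ K · h · (log N) · log(N+h), where C_{Λ,Λ_N}(N,h) = ∑_{n ≤ N} Λ(n) Λ_N(n+h). -/
open Finset

/-- The full correlation `C_{Λ,Λ}(N,h) = ∑_{n ≤ N} Λ(n) Λ(n+h)`. -/
noncomputable def corrLL (N h : ℕ) : ℝ :=
  ∑ n ∈ Finset.Icc 1 N, ArithmeticFunction.vonMangoldt n * ArithmeticFunction.vonMangoldt (n + h)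

/-!
Möbius inversion of `log` gives `Λ n - Λ_N n = -∑_{d ∣ n, d > N} μ(d) log d`, so the difference of
the two correlations only involves pairs `(m, d)` with `m ≤ N`, `N < d` and `d ∣ m + h`. Each such
`d` lies in `(N, N + h]`, and the `N` consecutive integers `m + h` contain at most one multiple of
`d > N`; hence there are at most `h` pairs, each contributing at most `log N · log (N + h)`.
-/

open Finset ArithmeticFunction
open scoped ArithmeticFunction.Moebius

lemma vonMangoldt_sub_LamN {n : ℕ} (N : ℕ) (hn : n ≠ 0) :
    Λ n - LamN N n = -∑ d ∈ n.divisors with N < d, (μ d : ℝ) * Real.log d := by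
  have hsmall : (Icc 1 N).filter (· ∣ n) = n.divisors.filter (· ≤ N) := by
    ext d
    simp only [mem_filter, mem_Icc, Nat.mem_divisors]
    constructor
    · rintro ⟨⟨-, hdN⟩, hdn⟩
      exact ⟨⟨hdn, hn⟩, hdN⟩
    · rintro ⟨⟨hdn, -⟩, hdN⟩
      exact ⟨⟨Nat.pos_of_dvd_of_pos hdn (Nat.pos_of_ne_zero hn), hdN⟩, hdn⟩
  have hsplit := sum_filter_add_sum_filter_not n.divisors (· ≤ N)
    (fun d => (μ d : ℝ) * Real.log d)
  simp only [not_le] at hsplit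
  have htotal : (∑ d ∈ n.divisors, (μ d : ℝ) * Real.log d) = -Λ n := sum_moebius_mul_log_eq
  rw [LamN, hsmall]
  linarith

lemma abs_sum_moebius_mul_log_le (n : ℕ) (p : ℕ → Prop) [DecidablePred p] :
    |∑ d ∈ n.divisors with p d, (μ d : ℝ) * Real.log d|
      ≤ #(n.divisors.filter p) * Real.log n := by
  rw [← nsmul_eq_mul]
  refine (abs_sum_le_sum_abs _ _).trans (sum_le_card_nsmul _ _ _ fun d hd => ?_)
  obtain ⟨hdn, hn⟩ := Nat.mem_divisors.1 (mem_filter.1 hd).1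
  have hd : 1 ≤ d := Nat.pos_of_dvd_of_pos hdn (Nat.pos_of_ne_zero hn)
  have hlog : 0 ≤ Real.log d := Real.log_nonneg (by exact_mod_cast hd)
  have hmu : |(μ d : ℝ)| ≤ 1 := by exact_mod_cast abs_moebius_le_one
  rw [abs_mul, abs_of_nonneg hlog]
  calc |(μ d : ℝ)| * Real.log d ≤ 1 * Real.log n :=
        mul_le_mul hmu (Real.log_le_log (by exact_mod_cast hd)
          (by exact_mod_cast Nat.le_of_dvd (Nat.pos_of_ne_zero hn) hdn)) hlog zero_le_one
    _ = Real.log n := one_mul _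

lemma card_filter_dvd_add_le_one {N d : ℕ} (hNd : N < d) (h : ℕ) :
    #{m ∈ Icc 1 N | d ∣ m + h} ≤ 1 := by
  refine card_le_one.2 fun m hm m' hm' => ?_
  simp only [mem_filter, mem_Icc] at hm hm'
  have hmod : m + h ≡ m' + h [MOD d] :=
    ((Nat.modEq_zero_iff_dvd.2 hm.2).trans (Nat.modEq_zero_iff_dvd.2 hm'.2).symm)
  exact (Nat.ModEq.add_right_cancel' h hmod).eq_of_lt_of_lt (by omega) (by omega)

lemma sum_card_large_divisors_le (N h : ℕ) :
    ∑ m ∈ Icc 1 N, #((m + h).divisors.filter (N < ·)) ≤ h := by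
  have hdiv : ∀ m ∈ Icc 1 N,
      (m + h).divisors.filter (N < ·)
        = (Ioc N (N + h)).bipartiteAbove (fun m d => d ∣ m + h) m := by
    intro m hm
    rw [mem_Icc] at hm
    ext d
    simp only [bipartiteAbove, mem_filter, Nat.mem_divisors, mem_Ioc]
    constructor
    · rintro ⟨⟨hdvd, hne⟩, hNd⟩
      exact ⟨⟨hNd, by have := Nat.le_of_dvd (Nat.pos_of_ne_zero hne) hdvd; omega⟩, hdvd⟩
    · rintro ⟨⟨hNd, -⟩, hdvd⟩
      exact ⟨⟨hdvd, by omega⟩, hNd⟩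
  calc ∑ m ∈ Icc 1 N, #((m + h).divisors.filter (N < ·))
      = ∑ m ∈ Icc 1 N, #((Ioc N (N + h)).bipartiteAbove (fun m d => d ∣ m + h) m) :=
        sum_congr rfl fun m hm => by rw [hdiv m hm]
    _ = ∑ d ∈ Ioc N (N + h), #((Icc 1 N).bipartiteBelow (fun m d => d ∣ m + h) d) :=
        sum_card_bipartiteAbove_eq_sum_card_bipartiteBelow _
    _ ≤ #(Ioc N (N + h)) * 1 :=
        sum_le_card_nsmul _ _ _ fun d hd => card_filter_dvd_add_le_one (mem_Ioc.1 hd).1 h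
    _ = h := by simp

lemma abs_vonMangoldt_mul_sub_LamN_le {N m : ℕ} (h : ℕ) (hm : m ∈ Icc 1 N) :
    |Λ m * (Λ (m + h) - LamN N (m + h))|
      ≤ Real.log N * Real.log ((N : ℝ) + h) * #((m + h).divisors.filter (N < ·)) := by
  rw [mem_Icc] at hm
  have hΛ : Λ m ≤ Real.log N :=
    vonMangoldt_le_log.trans (Real.log_le_log (by exact_mod_cast hm.1) (by exact_mod_cast hm.2))
  have hlog : Real.log (m + h : ℕ) ≤ Real.log ((N : ℝ) + h) :=
    Real.log_le_log (by norm_cast; omega)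
      (by push_cast; exact add_le_add_left (by exact_mod_cast hm.2) _)
  rw [vonMangoldt_sub_LamN N (by omega), abs_mul, abs_neg, abs_of_nonneg vonMangoldt_nonneg]
  calc Λ m * |∑ d ∈ (m + h).divisors with N < d, (μ d : ℝ) * Real.log d|
      ≤ Real.log N * (#((m + h).divisors.filter (N < ·)) * Real.log ((N : ℝ) + h)) :=
        mul_le_mul hΛ ((abs_sum_moebius_mul_log_le _ _).trans
          (mul_le_mul_of_nonneg_left hlog (Nat.cast_nonneg _))) (abs_nonneg _)
          (Real.log_natCast_nonneg N)
    _ = _ := by ring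

/-- `|C_{Λ,Λ}(N,h) − C_{Λ,Λ_N}(N,h)| ≤ K h (log N) log(N+h)`. -/
theorem stmt7 : ∃ K : ℝ, ∀ N h : ℕ, 2 ≤ N → 1 ≤ h →
    |corrLL N h - corr N h| ≤ K * h * Real.log N * Real.log ((N : ℝ) + h) := by
  refine ⟨1, fun N h _ _ => ?_⟩
  have hlog : 0 ≤ Real.log N * Real.log ((N : ℝ) + h) :=
    mul_nonneg (Real.log_natCast_nonneg N) (by exact_mod_cast Real.log_natCast_nonneg (N + h))
  have hcount : (∑ m ∈ Icc 1 N, #((m + h).divisors.filter (N < ·)) : ℝ) ≤ h := by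
    exact_mod_cast sum_card_large_divisors_le N h
  calc |corrLL N h - corr N h|
      = |∑ m ∈ Icc 1 N, Λ m * (Λ (m + h) - LamN N (m + h))| := by
        simp only [corrLL, corr, mul_sub, sum_sub_distrib]
    _ ≤ ∑ m ∈ Icc 1 N,
          Real.log N * Real.log ((N : ℝ) + h) * #((m + h).divisors.filter (N < ·)) :=
        (abs_sum_le_sum_abs _ _).trans
          (sum_le_sum fun m hm => abs_vonMangoldt_mul_sub_LamN_le h hm)
    _ ≤ Real.log N * Real.log ((N : ℝ) + h) * h := by
        rw [← mul_sum]; exact mul_le_mul_of_nonneg_left hcount hlog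
    _ = 1 * h * Real.log N * Real.log ((N : ℝ) + h) := by ring
end

section
/- Define ℛ(N,h) = ∑_{n ≤ N} ∑_{q ≤ N, gcd(n,q) > 1} Λ(n) Λ̂_N(q) ( c_q(n+h) − c_q(n) c_q(h) / φ(q) ). Then for every ε > 0 and every fixed h ∈ ℕ one has ℛ(N,h) ≪_ε (N+h)^ε, i.e. there is a constant K (depending only on ε and h) with |ℛ(N,h)| ≤ K (N+h)^ε for all sufficiently large N ∈ ℕ. -/
/-!
Since `Λ(n) = 0` unless `n = p^a` and `Λ̂_N(q) = 0` unless `q` is squarefree, the condition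
`gcd(n, q) > 1` becomes `p ∣ q`. Kluyver's formula gives `|c_q(m)| ≤ σ(gcd(q, m))`; for squarefree
`q` this is `|c_q(p^a)| ≤ p + 1 ≤ 3 (p - 1) ≤ 3 φ(q)`, while `|Λ̂_N(q)| ≤ (1 + log N)^2 / q`.
Writing `σ(gcd(q, m)) = ∑_{d ∣ m, d ∣ q} d` and summing first over the multiples `q ≤ N` of
`lcm(p, d)` bounds the sum over `q` by `(1 + log N)^4 (τ(p^a + h) + 3 σ(h)) gcd(p, h) / p`.
Summing over the at most `log₂ N` exponents `a` and over `p ≤ N` costs a further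
`(1 + log N)^2 τ(h)`, and the divisor bound `τ(m) ≪_δ m^δ` finishes the proof.
-/

open Finset

/-- The remainder term `ℛ(N,h)`. -/
noncomputable def RR (N h : ℕ) : ℂ :=
  ∑ n ∈ Finset.Icc 1 N, ∑ q ∈ (Finset.Icc 1 N).filter (fun q => 1 < Nat.gcd n q),
    (ArithmeticFunction.vonMangoldt n : ℂ) * (LamHat N q : ℂ) *
      (cq q ((n : ℤ) + h) - cq q (n : ℤ) * cq q (h : ℤ) / (Nat.totient q : ℂ))

open ArithmeticFunction
open scoped Real ArithmeticFunction.Moebius ArithmeticFunction.sigma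

/-! ### Ramanujan sums -/

lemma sum_Icc_filter_dvd {M : Type*} [AddCommMonoid M] {d : ℕ} (hd : 0 < d) (m : ℕ)
    (f : ℕ → M) : ∑ j ∈ Icc 1 m with d ∣ j, f j = ∑ t ∈ Icc 1 (m / d), f (d * t) := by
  have hset : {j ∈ Icc 1 m | d ∣ j} = (Icc 1 (m / d)).image (d * ·) := by
    ext j
    simp only [mem_filter, mem_Icc, mem_image, Nat.le_div_iff_mul_le hd]
    constructor
    · rintro ⟨⟨h1, h2⟩, t, rfl⟩
      exact ⟨t, ⟨Nat.pos_of_mul_pos_left h1, by linarith [mul_comm d t]⟩, rfl⟩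
    · rintro ⟨t, ⟨h1, h2⟩, rfl⟩
      exact ⟨⟨Nat.mul_pos hd h1, by linarith [mul_comm d t]⟩, dvd_mul_right d t⟩
  rw [hset, sum_image fun a _ b _ hab => Nat.eq_of_mul_eq_mul_left hd hab]

lemma sum_Icc_exp_eq_ite {m : ℕ} (hm : 0 < m) (y : ℤ) :
    ∑ t ∈ Icc 1 m, Complex.exp (2 * π * Complex.I * t * y / m) =
      if (m : ℤ) ∣ y then (m : ℂ) else 0 := by
  have hm0 : (m : ℂ) ≠ 0 := by exact_mod_cast hm.ne'
  set z := Complex.exp (2 * π * Complex.I * y / m)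
  have hpow (t : ℕ) : Complex.exp (2 * π * Complex.I * t * y / m) = z ^ t := by
    rw [← Complex.exp_nat_mul]; ring_nf
  simp_rw [hpow]
  split_ifs with hdvd
  · obtain ⟨k, rfl⟩ := hdvd
    have hz : z = 1 := by
      rw [Complex.exp_eq_one_iff]
      exact ⟨k, by push_cast; field_simp⟩
    simp [hz]
  · have hz : z ≠ 1 := by
      rw [Ne, Complex.exp_eq_one_iff]
      rintro ⟨k, hk⟩
      refine hdvd ⟨k, ?_⟩
      field_simp at hk
      exact_mod_cast hk
    have hzm : z ^ m = 1 := by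
      rw [← Complex.exp_nat_mul, ← Complex.exp_int_mul_two_pi_mul_I y]
      congr 1; field_simp
    rw [← Ico_add_one_right_eq_Icc, sum_Ico_eq_sum_range, Nat.add_sub_cancel]
    simp_rw [pow_add, pow_one, ← mul_sum, geom_sum_eq hz, hzm, sub_self, zero_div, mul_zero]

lemma sum_divisors_moebius_eq_ite (n : ℕ) :
    ∑ d ∈ n.divisors, (μ d : ℂ) = if n = 1 then 1 else 0 := by
  have h := congr($(coe_moebius_mul_coe_zeta (R := ℂ)) n)
  rw [coe_mul_zeta_apply, one_apply] at h
  simpa only [intCoe_apply] using h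

theorem cq_eq_sum_divisors (q : ℕ) (y : ℤ) :
    cq q y = ∑ d ∈ q.divisors.filter (fun d : ℕ => (d : ℤ) ∣ y), (d : ℂ) * μ (q / d) := by
  rcases Nat.eq_zero_or_pos q with rfl | hq
  · simp [cq]
  -- Möbius detects `gcd j q = 1`; the sum over the multiples `j = d t` is then a complete
  -- geometric sum modulo `q / d`.
  have hcoprime (j : ℕ) (c : ℂ) : (if j.Coprime q then c else 0) =
      ∑ d ∈ q.divisors, if d ∣ j then (μ d : ℂ) * c else 0 := by
    have hdiv : {d ∈ q.divisors | d ∣ j} = (j.gcd q).divisors := by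
      ext d
      simp [Nat.dvd_gcd_iff, hq.ne', and_comm]
    rw [← sum_filter, ← sum_mul, hdiv, sum_divisors_moebius_eq_ite]
    split_ifs <;> simp_all [Nat.Coprime]
  calc cq q y
      = ∑ j ∈ Icc 1 q, ∑ d ∈ q.divisors,
          if d ∣ j then (μ d : ℂ) * Complex.exp (2 * π * Complex.I * j * y / q) else 0 := by
        rw [cq, sum_filter]
        refine sum_congr rfl fun j _ => ?_
        rw [hcoprime]
    _ = ∑ d ∈ q.divisors, (μ d : ℂ) * ∑ t ∈ Icc 1 (q / d),
          Complex.exp (2 * π * Complex.I * t * y / (q / d : ℕ)) := by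
        rw [sum_comm]
        refine sum_congr rfl fun d hd => ?_
        have hd0 : 0 < d := Nat.pos_of_mem_divisors hd
        rw [← sum_filter, sum_Icc_filter_dvd hd0, mul_sum]
        refine sum_congr rfl fun t _ => ?_
        rw [Nat.cast_div (Nat.dvd_of_mem_divisors hd) (by exact_mod_cast hd0.ne')]
        have : (d : ℂ) ≠ 0 := by exact_mod_cast hd0.ne'
        push_cast
        congr 2
        field_simp
    _ = ∑ d ∈ q.divisors,
          (μ d : ℂ) * if ((q / d : ℕ) : ℤ) ∣ y then ((q / d : ℕ) : ℂ) else 0 := by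
        refine sum_congr rfl fun d hd => ?_
        rw [sum_Icc_exp_eq_ite (Nat.div_pos (Nat.divisor_le hd) (Nat.pos_of_mem_divisors hd))]
    _ = ∑ d ∈ q.divisors.filter (fun d : ℕ => (d : ℤ) ∣ y), (d : ℂ) * μ (q / d) := by
        rw [← Nat.sum_div_divisors q, sum_filter]
        refine sum_congr rfl fun d hd => ?_
        rw [Nat.div_div_self (Nat.dvd_of_mem_divisors hd) hq.ne']
        split_ifs <;> ring

theorem norm_cq_le_sigma_gcd (q m : ℕ) : ‖cq q m‖ ≤ σ 1 (q.gcd m) := by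
  have hsub : q.divisors.filter (fun d : ℕ => (d : ℤ) ∣ m) ⊆ (q.gcd m).divisors := by
    intro d hd
    simp only [mem_filter, Nat.mem_divisors, Int.natCast_dvd_natCast] at hd ⊢
    exact ⟨Nat.dvd_gcd hd.1.1 hd.2, Nat.gcd_ne_zero_left hd.1.2⟩
  rw [cq_eq_sum_divisors, sigma_one_apply, Nat.cast_sum]
  calc ‖∑ d ∈ q.divisors.filter (fun d : ℕ => (d : ℤ) ∣ m), (d : ℂ) * μ (q / d)‖
      ≤ ∑ d ∈ q.divisors.filter (fun d : ℕ => (d : ℤ) ∣ m), (d : ℝ) := by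
        refine (norm_sum_le _ _).trans (sum_le_sum fun d _ => ?_)
        rw [norm_mul, Complex.norm_natCast, Complex.norm_intCast]
        exact mul_le_of_le_one_right d.cast_nonneg (mod_cast abs_moebius_le_one)
    _ ≤ ∑ d ∈ (q.gcd m).divisors, (d : ℝ) :=
        sum_le_sum_of_subset_of_nonneg hsub fun _ _ _ => by positivity

lemma sigma_one_le_of_dvd {m n : ℕ} (hn : n ≠ 0) (h : m ∣ n) : σ 1 m ≤ σ 1 n := by
  simp only [sigma_one_apply]
  exact sum_le_sum_of_subset (Nat.divisors_subset_of_dvd hn h)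

lemma self_le_sigma_one {n : ℕ} (hn : n ≠ 0) : n ≤ σ 1 n := by
  rw [sigma_one_apply]
  exact single_le_sum (f := fun d => d) (fun _ _ => Nat.zero_le _) (Nat.mem_divisors_self n hn)

lemma sigma_one_gcd_prime_pow_le {q p : ℕ} (hq : Squarefree q) (hp : p.Prime) (a : ℕ) :
    σ 1 (q.gcd (p ^ a)) ≤ p + 1 := by
  obtain ⟨i, -, hgcd⟩ := (Nat.dvd_prime_pow hp).1 (Nat.gcd_dvd_right q (p ^ a))
  have hsq : Squarefree (p ^ i) := hgcd ▸ hq.squarefree_of_dvd (Nat.gcd_dvd_left q _)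
  have hi : i ≤ 1 := by
    by_contra! hi
    exact absurd ((Nat.squarefree_pow_iff hp.ne_one (by omega)).1 hsq).2 (by omega)
  rw [hgcd, sigma_one_apply_prime_pow hp]
  calc ∑ k ∈ range (i + 1), p ^ k ≤ ∑ k ∈ range 2, p ^ k :=
        sum_le_sum_of_subset (range_subset_range.2 (by omega))
    _ = p + 1 := by simp [sum_range_succ, add_comm]

lemma norm_cq_sub_le {q p h : ℕ} (hq : Squarefree q) (hp : p.Prime) (hpq : p ∣ q) (hh : h ≠ 0)
    (a : ℕ) :
    ‖cq q ((p ^ a : ℕ) + h) - cq q (p ^ a : ℕ) * cq q h / (Nat.totient q : ℂ)‖ ≤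
      σ 1 (q.gcd (p ^ a + h)) + 3 * σ 1 h := by
  have hp2 : (2 : ℝ) ≤ p := by exact_mod_cast hp.two_le
  have htotient : (p : ℝ) - 1 ≤ Nat.totient q := by
    have := Nat.le_of_dvd (Nat.totient_pos.2 (Nat.pos_of_ne_zero hq.ne_zero))
      (Nat.totient_dvd_of_dvd hpq)
    rw [Nat.totient_prime hp] at this
    rw [sub_le_iff_le_add]
    exact_mod_cast Nat.sub_le_iff_le_add.1 this
  have hprod : ‖cq q (p ^ a : ℕ)‖ * ‖cq q h‖ ≤ (p + 1) * σ 1 h := by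
    gcongr
    · exact (norm_cq_le_sigma_gcd q _).trans (mod_cast sigma_one_gcd_prime_pow_le hq hp a)
    · exact (norm_cq_le_sigma_gcd q h).trans
        (mod_cast sigma_one_le_of_dvd hh (Nat.gcd_dvd_right q h))
  calc ‖cq q ((p ^ a : ℕ) + h) - cq q (p ^ a : ℕ) * cq q h / (Nat.totient q : ℂ)‖
      ≤ ‖cq q ((p ^ a + h : ℕ) : ℤ)‖ + ‖cq q (p ^ a : ℕ)‖ * ‖cq q h‖ / Nat.totient q := by
        rw [← norm_mul, ← Complex.norm_natCast, ← norm_div]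
        exact_mod_cast norm_sub_le _ _
    _ ≤ σ 1 (q.gcd (p ^ a + h)) + (p + 1) * σ 1 h / (p - 1) := by
        gcongr
        · exact norm_cq_le_sigma_gcd q _
        · linarith
    _ ≤ σ 1 (q.gcd (p ^ a + h)) + 3 * σ 1 h := by
        gcongr
        rw [div_le_iff₀ (by linarith)]
        nlinarith [(σ 1 h).cast_nonneg (α := ℝ)]

/-! ### Harmonic sums and the coefficients `Λ̂_N(q)` -/

lemma sum_Icc_inv_le_one_add_log {M N : ℕ} (h : M ≤ N) :
    ∑ d ∈ Icc 1 M, (d : ℝ)⁻¹ ≤ 1 + Real.log N := by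
  calc ∑ d ∈ Icc 1 M, (d : ℝ)⁻¹ ≤ ∑ d ∈ Icc 1 N, (d : ℝ)⁻¹ :=
        sum_le_sum_of_subset_of_nonneg (Icc_subset_Icc_right h) fun _ _ _ => by positivity
    _ ≤ 1 + Real.log N := by simpa [harmonic_eq_sum_Icc] using harmonic_le_one_add_log N

lemma sum_Icc_filter_dvd_inv_le {k : ℕ} (hk : 0 < k) (N : ℕ) :
    ∑ q ∈ Icc 1 N with k ∣ q, (q : ℝ)⁻¹ ≤ (1 + Real.log N) / k := by
  rw [sum_Icc_filter_dvd hk, div_eq_inv_mul]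
  simp_rw [Nat.cast_mul, mul_inv, ← mul_sum]
  gcongr
  exact sum_Icc_inv_le_one_add_log (Nat.div_le_self N k)

lemma abs_LamHat_le (N : ℕ) {q : ℕ} (hq : 0 < q) :
    |LamHat N q| ≤ (1 + Real.log N) ^ 2 / q := by
  have hlog : 0 ≤ Real.log N := Real.log_natCast_nonneg N
  have hterm (d : ℕ) (hd : d ∈ Icc 1 (N / q)) :
      |(μ d : ℝ) * Real.log (d * q) / d| ≤ Real.log N * (d : ℝ)⁻¹ := by
    rw [mem_Icc, Nat.le_div_iff_mul_le hq] at hd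
    have hdq : (1 : ℝ) ≤ d * q := by exact_mod_cast Nat.mul_pos hd.1 hq
    rw [abs_div, abs_mul, abs_of_nonneg (Real.log_nonneg hdq), Nat.abs_cast, div_eq_mul_inv]
    gcongr
    calc |(μ d : ℝ)| * Real.log (d * q) ≤ 1 * Real.log N :=
          mul_le_mul (mod_cast abs_moebius_le_one)
            (Real.log_le_log (by positivity) (mod_cast hd.2)) (Real.log_nonneg hdq) zero_le_one
      _ = Real.log N := one_mul _
  have hsum : |∑ d ∈ Icc 1 (N / q) with d.Coprime q, (μ d : ℝ) * Real.log (d * q) / d| ≤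
      Real.log N * (1 + Real.log N) :=
    calc _ ≤ ∑ d ∈ Icc 1 (N / q) with d.Coprime q, |(μ d : ℝ) * Real.log (d * q) / d| :=
          abs_sum_le_sum_abs _ _
      _ ≤ ∑ d ∈ Icc 1 (N / q), |(μ d : ℝ) * Real.log (d * q) / d| :=
          sum_le_sum_of_subset_of_nonneg (filter_subset _ _) fun _ _ _ => abs_nonneg _
      _ ≤ ∑ d ∈ Icc 1 (N / q), Real.log N * (d : ℝ)⁻¹ := sum_le_sum hterm
      _ ≤ Real.log N * (1 + Real.log N) := by
          rw [← mul_sum]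
          exact mul_le_mul_of_nonneg_left (sum_Icc_inv_le_one_add_log (Nat.div_le_self N q)) hlog
  calc |LamHat N q|
      = |(μ q : ℝ)| / q *
          |∑ d ∈ Icc 1 (N / q) with d.Coprime q, (μ d : ℝ) * Real.log (d * q) / d| := by
        rw [LamHat, abs_mul, abs_neg, abs_div, Nat.abs_cast]
    _ ≤ 1 / q * (Real.log N * (1 + Real.log N)) := by
        gcongr
        exact_mod_cast abs_moebius_le_one
    _ ≤ (1 + Real.log N) ^ 2 / q := by
        rw [one_div_mul_eq_div]
        gcongr
        nlinarith

lemma sum_sigma_one_gcd_div_le {k y : ℕ} (hk : 0 < k) (hy : y ≠ 0) (N : ℕ) :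
    ∑ q ∈ Icc 1 N with k ∣ q, (σ 1 (q.gcd y) : ℝ) / q ≤
      #y.divisors * (1 + Real.log N) * (k.gcd y / k) := by
  have hσ (q : ℕ) :
      (σ 1 (q.gcd y) : ℝ) = ∑ d ∈ y.divisors, if d ∣ q then (d : ℝ) else 0 := by
    rw [sigma_one_apply, ← sum_filter, Nat.cast_sum]
    congr 1
    ext d
    simp [Nat.dvd_gcd_iff, hy, and_comm]
  have hswap (d : ℕ) : ∑ q ∈ Icc 1 N with k ∣ q, (if d ∣ q then (d : ℝ) else 0) / q =
      d * ∑ q ∈ Icc 1 N with k.lcm d ∣ q, (q : ℝ)⁻¹ := by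
    rw [mul_sum, sum_filter, sum_filter]
    refine sum_congr rfl fun q _ => ?_
    simp only [Nat.lcm_dvd_iff]
    split_ifs <;> simp_all [div_eq_mul_inv]
  have hlcm (d : ℕ) (hd : d ∈ y.divisors) :
      (d : ℝ) * ((1 + Real.log N) / k.lcm d) = (1 + Real.log N) * (k.gcd d / k) := by
    have hgl : (k.gcd d : ℝ) * k.lcm d = k * d := by exact_mod_cast Nat.gcd_mul_lcm k d
    have hl0 : (k.lcm d : ℝ) ≠ 0 := by
      exact_mod_cast (Nat.lcm_pos hk (Nat.pos_of_mem_divisors hd)).ne'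
    have hk0 : (k : ℝ) ≠ 0 := by exact_mod_cast hk.ne'
    have hratio : (d : ℝ) / k.lcm d = k.gcd d / k := by
      rw [div_eq_div_iff hl0 hk0]
      linarith
    rw [← hratio]
    ring
  calc ∑ q ∈ Icc 1 N with k ∣ q, (σ 1 (q.gcd y) : ℝ) / q
      = ∑ d ∈ y.divisors, d * ∑ q ∈ Icc 1 N with k.lcm d ∣ q, (q : ℝ)⁻¹ := by
        simp_rw [hσ, sum_div]
        rw [sum_comm]
        exact sum_congr rfl fun d _ => hswap d
    _ ≤ ∑ d ∈ y.divisors, d * ((1 + Real.log N) / k.lcm d) := by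
        gcongr with d hd
        exact sum_Icc_filter_dvd_inv_le (Nat.lcm_pos hk (Nat.pos_of_mem_divisors hd)) N
    _ = ∑ d ∈ y.divisors, (1 + Real.log N) * (k.gcd d / k) := sum_congr rfl hlcm
    _ ≤ ∑ d ∈ y.divisors, (1 + Real.log N) * (k.gcd y / k) := by
        gcongr with d hd
        exact Nat.le_of_dvd (Nat.gcd_pos_of_pos_left y hk)
          (Nat.gcd_dvd_gcd_of_dvd_right k (Nat.dvd_of_mem_divisors hd))
    _ = #y.divisors * (1 + Real.log N) * (k.gcd y / k) := by
        rw [sum_const, nsmul_eq_mul, mul_assoc]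

/-! ### Growth of `τ` and `log` -/

lemma add_one_le_mul_pow {r : ℝ} (hr : 1 < r) (e : ℕ) :
    (e : ℝ) + 1 ≤ r / (r - 1) * r ^ e := by
  have hbern := one_add_mul_le_pow (a := r - 1) (by linarith) (e + 1)
  rw [add_sub_cancel, pow_succ] at hbern
  rw [div_mul_eq_mul_div, le_div_iff₀ (by linarith)]
  push_cast at hbern
  nlinarith

theorem card_divisors_le_mul_rpow {δ : ℝ} (hδ : 0 < δ) :
    ∃ C : ℝ, ∀ n : ℕ, (#n.divisors : ℝ) ≤ C * (n : ℝ) ^ δ := by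
  -- `τ(n) / n^δ = ∏_{p^e ∥ n} (e + 1) / (p^δ)^e`: the factor is at most `1` once `p^δ ≥ 2`,
  -- and at most `B` for each of the finitely many smaller primes.
  obtain ⟨M, hM⟩ := Filter.eventually_atTop.1 <|
    ((tendsto_rpow_atTop hδ).comp tendsto_natCast_atTop_atTop).eventually_ge_atTop 2
  set r : ℝ := 2 ^ δ
  have hr : 1 < r := Real.one_lt_rpow one_lt_two hδ
  set B := r / (r - 1)
  have hB : 1 ≤ B := by rw [le_div_iff₀ (by linarith)]; linarith
  refine ⟨B ^ M, fun n => ?_⟩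
  rcases eq_or_ne n 0 with rfl | hn
  · simp [Real.zero_rpow hδ.ne']
  set e := n.factorization
  have hfactor (p : ℕ) (hp : p ∈ n.primeFactors) :
      ((e p + 1 : ℕ) : ℝ) ≤ (if p < M then B else 1) * ((p : ℝ) ^ δ) ^ e p := by
    have hp2 : (2 : ℝ) ≤ p := by exact_mod_cast (Nat.prime_of_mem_primeFactors hp).two_le
    have hpδ : r ≤ (p : ℝ) ^ δ := Real.rpow_le_rpow zero_le_two hp2 hδ.le
    push_cast
    split_ifs with hpM
    · calc (e p : ℝ) + 1 ≤ B * r ^ e p := add_one_le_mul_pow hr _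
        _ ≤ B * ((p : ℝ) ^ δ) ^ e p := by gcongr
    · calc (e p : ℝ) + 1 ≤ 2 ^ e p := by exact_mod_cast Nat.lt_two_pow_self
        _ ≤ 1 * ((p : ℝ) ^ δ) ^ e p := by
          rw [one_mul]; gcongr; exact hM p (by omega)
  have hrpow : (n : ℝ) ^ δ = ∏ p ∈ n.primeFactors, ((p : ℝ) ^ δ) ^ e p := by
    conv_lhs => rw [← Nat.prod_factorization_pow_eq_self hn]
    rw [Finsupp.prod, Nat.support_factorization, Nat.cast_prod,
      ← Real.finsetProd_rpow _ _ fun _ _ => by positivity]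
    refine prod_congr rfl fun p _ => ?_
    rw [Nat.cast_pow, ← Real.rpow_natCast, ← Real.rpow_natCast, ← Real.rpow_mul, mul_comm,
      Real.rpow_mul] <;> positivity
  have hsmall : #{p ∈ n.primeFactors | p < M} ≤ M :=
    (card_le_card fun p hp => mem_range.2 (mem_filter.1 hp).2).trans (card_range M).le
  calc (#n.divisors : ℝ) = ∏ p ∈ n.primeFactors, ((e p + 1 : ℕ) : ℝ) := by
        rw [Nat.card_divisors hn, Nat.cast_prod]
    _ ≤ ∏ p ∈ n.primeFactors, (if p < M then B else 1) * ((p : ℝ) ^ δ) ^ e p :=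
        prod_le_prod (fun _ _ => by positivity) hfactor
    _ = B ^ #{p ∈ n.primeFactors | p < M} * (n : ℝ) ^ δ := by
        rw [prod_mul_distrib, ← prod_filter, prod_const, hrpow]
    _ ≤ B ^ M * (n : ℝ) ^ δ := by gcongr

lemma one_add_log_pow_le_mul_rpow {k : ℕ} (hk : 0 < k) {δ : ℝ} (hδ : 0 < δ) :
    ∃ C : ℝ, ∀ x : ℝ, 1 ≤ x → (1 + Real.log x) ^ k ≤ C * x ^ δ := by
  set η := δ / k
  have hη : 0 < η := by positivity
  refine ⟨(1 + 1 / η) ^ k, fun x hx => ?_⟩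
  have hlog := Real.log_le_rpow_div (by linarith : 0 ≤ x) hη
  have hxη : 1 ≤ x ^ η := Real.one_le_rpow hx hη.le
  calc (1 + Real.log x) ^ k ≤ ((1 + 1 / η) * x ^ η) ^ k := by
        gcongr
        · linarith [Real.log_nonneg hx]
        · rw [add_mul, one_mul, one_div_mul_eq_div]
          linarith
    _ = (1 + 1 / η) ^ k * x ^ δ := by
        rw [mul_pow, ← Real.rpow_mul_natCast (by linarith), div_mul_cancel₀ δ (by positivity)]

lemma natLog_two_le_two_mul_log (N : ℕ) : (Nat.log 2 N : ℝ) ≤ 2 * Real.log N := by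
  have hlog2 : 1 / 2 < Real.log 2 := by linarith [Real.log_two_gt_d9]
  calc (Nat.log 2 N : ℝ) ≤ Real.log N / Real.log 2 := by exact_mod_cast Real.natLog_le_logb N 2
    _ ≤ 2 * Real.log N := by
        rw [div_le_iff₀ (by linarith)]
        nlinarith [Real.log_natCast_nonneg N]

/-! ### The remainder `ℛ(N, h)` -/

lemma sum_isPrimePow_le (N : ℕ) {F G : ℕ → ℝ} (hG : ∀ p, 0 ≤ G p)
    (hFG : ∀ p a, p.Prime → a ≠ 0 → p ^ a ≤ N → F (p ^ a) ≤ G p) :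
    ∑ n ∈ Icc 1 N with IsPrimePow n, F n ≤ Nat.log 2 N * ∑ p ∈ Icc 1 N, G p := by
  set P := {p ∈ Icc 1 N | p.Prime} ×ˢ Icc 1 (Nat.log 2 N)
  have hpow (n : ℕ) (hn : n ∈ Icc 1 N ∧ IsPrimePow n) :
      ∃ p a, p.Prime ∧ a ≠ 0 ∧ p ^ a ≤ N ∧ (p, a) ∈ P ∧ p ^ a = n := by
    obtain ⟨p, a, hp, ha, rfl⟩ := (isPrimePow_nat_iff _).1 hn.2
    have hpa : p ^ a ≤ N := (mem_Icc.1 hn.1).2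
    refine ⟨p, a, hp, ha.ne', hpa, ?_, rfl⟩
    simp only [P, mem_product, mem_filter, mem_Icc]
    exact ⟨⟨⟨hp.one_lt.le, (Nat.le_self_pow ha.ne' p).trans hpa⟩, hp⟩, ha,
      Nat.le_log_of_pow_le one_lt_two ((Nat.pow_le_pow_left hp.two_le a).trans hpa)⟩
  have hsub : {n ∈ Icc 1 N | IsPrimePow n} ⊆ P.image fun x => x.1 ^ x.2 := by
    intro n hn
    obtain ⟨p, a, -, -, -, hP, rfl⟩ := hpow n (mem_filter.1 hn)
    exact mem_image_of_mem _ hP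
  calc ∑ n ∈ Icc 1 N with IsPrimePow n, F n
      ≤ ∑ n ∈ Icc 1 N with IsPrimePow n, G n.minFac := by
        refine sum_le_sum fun n hn => ?_
        obtain ⟨p, a, hp, ha, hpa, -, rfl⟩ := hpow n (mem_filter.1 hn)
        rw [hp.pow_minFac ha]
        exact hFG p a hp ha hpa
    _ ≤ ∑ n ∈ P.image fun x => x.1 ^ x.2, G n.minFac :=
        sum_le_sum_of_subset_of_nonneg hsub fun _ _ _ => hG _
    _ ≤ ∑ x ∈ P, G (x.1 ^ x.2).minFac := sum_image_le_of_nonneg fun _ _ => hG _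
    _ = ∑ x ∈ P, G x.1 := by
        refine sum_congr rfl fun x hx => ?_
        simp only [P, mem_product, mem_filter, mem_Icc] at hx
        rw [hx.1.2.pow_minFac (by omega)]
    _ = Nat.log 2 N * ∑ p ∈ Icc 1 N with p.Prime, G p := by
        rw [sum_product, mul_sum]
        simp
    _ ≤ Nat.log 2 N * ∑ p ∈ Icc 1 N, G p :=
        mul_le_mul_of_nonneg_left
          (sum_le_sum_of_subset_of_nonneg (filter_subset _ _) fun p _ _ => hG p)
          (Nat.cast_nonneg _)

noncomputable def RRTerm (N h n : ℕ) : ℂ :=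
  ∑ q ∈ (Icc 1 N).filter (fun q => 1 < Nat.gcd n q),
    (Λ n : ℂ) * (LamHat N q : ℂ) *
      (cq q ((n : ℤ) + h) - cq q (n : ℤ) * cq q (h : ℤ) / (Nat.totient q : ℂ))

lemma RRTerm_eq_zero_of_not_isPrimePow (N h : ℕ) {n : ℕ} (hn : ¬IsPrimePow n) :
    RRTerm N h n = 0 := by
  simp [RRTerm, vonMangoldt_eq_zero_iff.2 hn]

lemma norm_RRTerm_summand_le {N h p a q : ℕ} (hh : h ≠ 0) (hp : p.Prime) (hpN : p ≤ N)
    (ha : a ≠ 0) (hq : 0 < q) (hpq : p ∣ q) :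
    ‖(Λ (p ^ a) : ℂ) * (LamHat N q : ℂ) *
        (cq q ((p ^ a : ℕ) + h) - cq q (p ^ a : ℕ) * cq q h / (Nat.totient q : ℂ))‖ ≤
      (1 + Real.log N) ^ 3 * ((σ 1 (q.gcd (p ^ a + h)) + 3 * σ 1 h) / q) := by
  by_cases hsq : Squarefree q
  swap
  · have : LamHat N q = 0 := by simp [LamHat, moebius_eq_zero_of_not_squarefree hsq]
    rw [this, Complex.ofReal_zero, mul_zero, zero_mul, norm_zero]
    positivity
  have hΛ : Λ (p ^ a) ≤ 1 + Real.log N := by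
    rw [vonMangoldt_apply_pow ha, vonMangoldt_apply_prime hp]
    have := Real.log_le_log (by exact_mod_cast hp.pos) (by exact_mod_cast hpN : (p : ℝ) ≤ N)
    linarith
  rw [norm_mul, norm_mul, Complex.norm_real, Complex.norm_real, Real.norm_of_nonneg
    vonMangoldt_nonneg, Real.norm_eq_abs]
  calc Λ (p ^ a) * |LamHat N q| *
        ‖cq q ((p ^ a : ℕ) + h) - cq q (p ^ a : ℕ) * cq q h / (Nat.totient q : ℂ)‖
      ≤ (1 + Real.log N) * ((1 + Real.log N) ^ 2 / q) *
          (σ 1 (q.gcd (p ^ a + h)) + 3 * σ 1 h) := by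
        gcongr
        · exact abs_LamHat_le N hq
        · exact norm_cq_sub_le hsq hp hpq hh a
    _ = (1 + Real.log N) ^ 3 * ((σ 1 (q.gcd (p ^ a + h)) + 3 * σ 1 h) / q) := by ring

lemma norm_RRTerm_prime_pow_le {N h p a : ℕ} (hh : h ≠ 0) (hp : p.Prime) (hpN : p ≤ N)
    (ha : a ≠ 0) :
    ‖RRTerm N h (p ^ a)‖ ≤
      (1 + Real.log N) ^ 4 * (#(p ^ a + h).divisors + 3 * σ 1 h) * (p.gcd h / p) := by
  set L := 1 + Real.log N
  have hsub : {q ∈ Icc 1 N | 1 < (p ^ a).gcd q} ⊆ {q ∈ Icc 1 N | p ∣ q} := by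
    intro q hq
    rw [mem_filter] at hq ⊢
    refine ⟨hq.1, ?_⟩
    by_contra hpq
    exact hq.2.ne' (Nat.Coprime.pow_left a ((Nat.Prime.coprime_iff_not_dvd hp).2 hpq))
  have hgcd : p.gcd (p ^ a + h) = p.gcd h := by
    rw [← Nat.succ_pred_eq_of_ne_zero ha, pow_succ, Nat.gcd_mul_right_add_right]
  have hinv : (p : ℝ)⁻¹ ≤ p.gcd h / p := by
    rw [inv_eq_one_div]
    gcongr
    exact_mod_cast Nat.gcd_pos_of_pos_left h hp.pos
  calc ‖RRTerm N h (p ^ a)‖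
      ≤ ∑ q ∈ Icc 1 N with p ∣ q, L ^ 3 * ((σ 1 (q.gcd (p ^ a + h)) + 3 * σ 1 h) / q) := by
        refine (norm_sum_le _ _).trans ?_
        refine sum_le_sum_of_subset_of_nonneg hsub (fun _ _ _ => by positivity) |>.trans' ?_
        refine sum_le_sum fun q hq => ?_
        have hq' := mem_filter.1 (hsub hq)
        push_cast
        exact norm_RRTerm_summand_le hh hp hpN ha (mem_Icc.1 hq'.1).1 hq'.2
    _ = L ^ 3 * (∑ q ∈ Icc 1 N with p ∣ q, (σ 1 (q.gcd (p ^ a + h)) : ℝ) / q +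
          3 * σ 1 h * ∑ q ∈ Icc 1 N with p ∣ q, (q : ℝ)⁻¹) := by
        simp only [mul_add, mul_sum, ← sum_add_distrib]
        exact sum_congr rfl fun q _ => by ring
    _ ≤ L ^ 3 * (#(p ^ a + h).divisors * L * (p.gcd h / p) + 3 * σ 1 h * (L / p)) := by
        gcongr
        · rw [← hgcd]
          exact sum_sigma_one_gcd_div_le hp.pos (by omega) N
        · exact sum_Icc_filter_dvd_inv_le hp.pos N
    _ ≤ L ^ 4 * (#(p ^ a + h).divisors + 3 * σ 1 h) * (p.gcd h / p) := by
        rw [div_eq_mul_inv L]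
        calc _ = L ^ 4 * #(p ^ a + h).divisors * (p.gcd h / p) +
              L ^ 4 * (3 * σ 1 h) * (p : ℝ)⁻¹ := by ring
          _ ≤ L ^ 4 * #(p ^ a + h).divisors * (p.gcd h / p) +
              L ^ 4 * (3 * σ 1 h) * (p.gcd h / p) := by gcongr
          _ = _ := by ring

theorem norm_RR_le {N h : ℕ} (hh : h ≠ 0) {T : ℝ}
    (hT : ∀ n ≤ N, (#(n + h).divisors : ℝ) ≤ T) :
    ‖RR N h‖ ≤ Nat.log 2 N * (1 + Real.log N) ^ 5 * (T + 3 * σ 1 h) * #h.divisors := by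
  set L := 1 + Real.log N
  have hT0 : 0 ≤ T := (Nat.cast_nonneg _).trans (hT 0 N.zero_le)
  have hgcd : ∑ p ∈ Icc 1 N, (p.gcd h : ℝ) / p ≤ #h.divisors * L :=
    calc ∑ p ∈ Icc 1 N, (p.gcd h : ℝ) / p
        ≤ ∑ p ∈ Icc 1 N with 1 ∣ p, (σ 1 (p.gcd h) : ℝ) / p := by
          rw [filter_true_of_mem fun p _ => one_dvd p]
          gcongr with p hp
          exact_mod_cast self_le_sigma_one (Nat.gcd_pos_of_pos_left h (mem_Icc.1 hp).1).ne'
      _ ≤ #h.divisors * L * ((1 : ℕ).gcd h / (1 : ℕ)) :=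
          sum_sigma_one_gcd_div_le one_pos hh N
      _ = #h.divisors * L := by simp
  calc ‖RR N h‖ ≤ ∑ n ∈ Icc 1 N, ‖RRTerm N h n‖ := norm_sum_le _ _
    _ = ∑ n ∈ Icc 1 N with IsPrimePow n, ‖RRTerm N h n‖ := by
        refine (sum_filter_of_ne fun n _ hn => ?_).symm
        by_contra hpp
        exact hn (by rw [RRTerm_eq_zero_of_not_isPrimePow N h hpp, norm_zero])
    _ ≤ Nat.log 2 N * ∑ p ∈ Icc 1 N, L ^ 4 * (T + 3 * σ 1 h) * (p.gcd h / p) := by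
        refine sum_isPrimePow_le N (fun p => by positivity) fun p a hp ha hpa => ?_
        refine (norm_RRTerm_prime_pow_le hh hp ((Nat.le_self_pow ha p).trans hpa) ha).trans ?_
        gcongr
        exact hT _ hpa
    _ ≤ Nat.log 2 N * (L ^ 4 * (T + 3 * σ 1 h) * (#h.divisors * L)) := by
        rw [← mul_sum]
        gcongr
    _ = Nat.log 2 N * L ^ 5 * (T + 3 * σ 1 h) * #h.divisors := by ring

theorem norm_RR_le_mul_rpow {N h : ℕ} (hh : h ≠ 0) {D δ : ℝ} (hδ : 0 ≤ δ)
    (hD : ∀ m : ℕ, (#m.divisors : ℝ) ≤ D * (m : ℝ) ^ δ) :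
    ‖RR N h‖ ≤ 2 * (1 + Real.log N) ^ 6 * (D + 3 * σ 1 h) * #h.divisors * ((N : ℝ) + h) ^ δ := by
  set A := ((N : ℝ) + h) ^ δ
  have hD0 : 0 ≤ D := zero_le_one.trans (by simpa using hD 1)
  have hA : 1 ≤ A := Real.one_le_rpow (by norm_cast; omega) hδ
  have hdiv (n : ℕ) (hn : n ≤ N) : (#(n + h).divisors : ℝ) ≤ D * A :=
    (hD _).trans <| mul_le_mul_of_nonneg_left
      (Real.rpow_le_rpow (by positivity) (by push_cast; gcongr) hδ) hD0
  calc ‖RR N h‖ ≤ Nat.log 2 N * (1 + Real.log N) ^ 5 * (D * A + 3 * σ 1 h) * #h.divisors :=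
        norm_RR_le hh hdiv
    _ ≤ 2 * (1 + Real.log N) * (1 + Real.log N) ^ 5 * ((D + 3 * σ 1 h) * A) * #h.divisors := by
        gcongr
        · linarith [natLog_two_le_two_mul_log N]
        · nlinarith [(σ 1 h).cast_nonneg (α := ℝ)]
    _ = 2 * (1 + Real.log N) ^ 6 * (D + 3 * σ 1 h) * #h.divisors * A := by ring

/-- `ℛ(N,h) ≪_ε (N+h)^ε`. -/
theorem stmt8 : ∀ ε : ℝ, 0 < ε → ∀ h : ℕ, 1 ≤ h → ∃ K : ℝ, ∃ N₀ : ℕ, ∀ N : ℕ, N₀ ≤ N →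
    ‖RR N h‖ ≤ K * ((N : ℝ) + (h : ℝ)) ^ ε := by
  intro ε hε h hh
  obtain ⟨D, hD⟩ := card_divisors_le_mul_rpow (half_pos hε)
  obtain ⟨C, hC⟩ := one_add_log_pow_le_mul_rpow (k := 6) (by norm_num) (half_pos hε)
  have hD0 : 0 ≤ D := zero_le_one.trans (by simpa using hD 1)
  have hC0 : 0 ≤ C := zero_le_one.trans (by simpa using hC 1 le_rfl)
  refine ⟨2 * C * (D + 3 * σ 1 h) * #h.divisors, 1, fun N hN => ?_⟩
  have hsplit : ((N : ℝ) + h) ^ ε = ((N : ℝ) + h) ^ (ε / 2) * ((N : ℝ) + h) ^ (ε / 2) := by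
    rw [← Real.rpow_add' (by positivity) (by positivity), add_halves]
  calc ‖RR N h‖
      ≤ 2 * (1 + Real.log N) ^ 6 * (D + 3 * σ 1 h) * #h.divisors * ((N : ℝ) + h) ^ (ε / 2) :=
        norm_RR_le_mul_rpow (by omega) (by positivity) hD
    _ ≤ 2 * (C * ((N : ℝ) + h) ^ (ε / 2)) * (D + 3 * σ 1 h) * #h.divisors *
          ((N : ℝ) + h) ^ (ε / 2) := by
        gcongr
        exact (hC N (mod_cast hN)).trans (by gcongr; linarith [h.cast_nonneg (α := ℝ)])
    _ = 2 * C * (D + 3 * σ 1 h) * #h.divisors * ((N : ℝ) + h) ^ ε := by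
        rw [hsplit]
        ring
end

section
/- There is an absolute constant K such that for all q, r, N ∈ ℕ with r ≥ 2 and r ∤ q, and all k ∈ ℤ, one has |S_N(q,k;r)| ≤ K r log r. -/
open Finset

lemma sum_moebius_divisors (n : ℕ) :
    ∑ d ∈ n.divisors, (ArithmeticFunction.moebius d) = if n = 1 then 1 else 0 := by
  have h := congrArg (fun f : ArithmeticFunction ℤ => f n) ArithmeticFunction.moebius_mul_coe_zeta
  simp only [ArithmeticFunction.mul_apply, ArithmeticFunction.one_apply, ArithmeticFunction.natCoe_apply] at h
  rw [← h, Nat.sum_divisorsAntidiagonal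
    (fun a b => ArithmeticFunction.moebius a * ((ArithmeticFunction.zeta b : ℕ) : ℤ))]
  apply Finset.sum_congr rfl
  intro i hi
  rw [Nat.mem_divisors] at hi
  have : n / i ≠ 0 := by
    have hi0 : i ≠ 0 := by rintro rfl; exact hi.2 (Nat.eq_zero_of_zero_dvd hi.1)
    have h1 := Nat.le_of_dvd (Nat.pos_of_ne_zero hi.2) hi.1
    have h2 := Nat.div_pos h1 (Nat.pos_of_ne_zero hi0)
    omega
  simp [ArithmeticFunction.zeta_apply, this]

lemma inner_reindex (r e : ℕ) (he : e ∣ r) (hr0 : r ≠ 0) (n : ℤ) :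
    ∑ j ∈ (Finset.Icc 1 r).filter (fun j => e ∣ j),
        Complex.exp (2 * Real.pi * Complex.I * j * n / r)
      = ∑ m ∈ Finset.Icc 1 (r/e),
        Complex.exp (2 * Real.pi * Complex.I * m * n / (r/e : ℕ)) := by
  have he0 : e ≠ 0 := by rintro rfl; exact hr0 (Nat.eq_zero_of_zero_dvd he)
  have hre : 1 ≤ r / e := Nat.div_pos (Nat.le_of_dvd (Nat.pos_of_ne_zero hr0) he) (by omega)
  have hreC : ((r/e : ℕ):ℂ) ≠ 0 := Nat.cast_ne_zero.mpr (by omega)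
  have heC : (e:ℂ) ≠ 0 := Nat.cast_ne_zero.mpr he0
  have hkey : (r:ℂ) = (e:ℂ) * ((r/e : ℕ):ℂ) := by
    rw [← Nat.cast_mul]
    exact_mod_cast congrArg (Nat.cast : ℕ → ℂ) (Nat.mul_div_cancel' he).symm
  apply Finset.sum_nbij' (fun j => j / e) (fun m => e * m)
  · intro j hj
    simp only [Finset.mem_filter, Finset.mem_Icc] at hj
    obtain ⟨⟨h1, h2⟩, h3⟩ := hj
    simp only [Finset.mem_Icc]
    constructor
    · exact Nat.div_pos (Nat.le_of_dvd (by omega) h3) (by omega)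
    · exact Nat.div_le_div_right h2
  · intro m hm
    simp only [Finset.mem_Icc] at hm
    simp only [Finset.mem_filter, Finset.mem_Icc]
    refine ⟨⟨Nat.one_le_iff_ne_zero.mpr (Nat.mul_ne_zero he0 (by omega)), ?_⟩, Dvd.intro m rfl⟩
    calc e * m ≤ e * (r/e) := Nat.mul_le_mul_left _ hm.2
      _ = r := Nat.mul_div_cancel' he
  · intro j hj
    simp only [Finset.mem_filter] at hj
    exact Nat.mul_div_cancel' hj.2
  · intro m hm
    exact Nat.mul_div_cancel_left _ (by omega)
  · intro j hj
    simp only [Finset.mem_filter, Finset.mem_Icc] at hj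
    obtain ⟨⟨h1, h2⟩, e2, rfl⟩ := hj
    congr 1
    rw [Nat.mul_div_cancel_left _ (by omega : 0 < e)]
    rw [hkey]
    push_cast
    field_simp

lemma expsum_eq (s : ℕ) (hs : 1 ≤ s) (n : ℤ) :
    ∑ m ∈ Finset.Icc 1 s, Complex.exp (2 * Real.pi * Complex.I * m * n / s)
      = if (s:ℤ) ∣ n then (s:ℂ) else 0 := by
  have hs0 : (s:ℂ) ≠ 0 := Nat.cast_ne_zero.mpr (by omega)
  set ζ : ℂ := Complex.exp (2 * Real.pi * Complex.I * n / s) with hζ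
  have hterm : ∀ m : ℕ, Complex.exp (2 * Real.pi * Complex.I * m * n / s) = ζ ^ m := by
    intro m
    rw [hζ, ← Complex.exp_nat_mul]
    congr 1
    ring
  by_cases hdvd : (s:ℤ) ∣ n
  · rw [if_pos hdvd]
    obtain ⟨c, rfl⟩ := hdvd
    have h1 : ∀ m ∈ Finset.Icc 1 s,
        Complex.exp (2 * Real.pi * Complex.I * m * ((s:ℤ)*c : ℤ) / s) = 1 := by
      intro m _
      rw [← Complex.exp_int_mul_two_pi_mul_I (m*c)]
      congr 1
      push_cast
      field_simp
    rw [Finset.sum_congr rfl h1, Finset.sum_const, Nat.card_Icc]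
    simp [Nat.sub_add_cancel hs]
  · rw [if_neg hdvd]
    have hζ1 : ζ ≠ 1 := by
      intro h
      rw [Complex.exp_eq_one_iff] at h
      obtain ⟨m, hm⟩ := h
      rw [div_eq_iff hs0] at hm
      have h2 : (2 * (Real.pi:ℂ) * Complex.I) ≠ 0 := by
        simp [Real.pi_ne_zero, Complex.I_ne_zero]
      have hnm : (n:ℂ) = (m:ℂ) * s := mul_left_cancel₀ h2 (by linear_combination hm)
      refine hdvd ⟨m, ?_⟩
      exact_mod_cast hnm.trans (mul_comm _ _)
    have hζs : ζ ^ s = 1 := by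
      rw [hζ, ← Complex.exp_nat_mul]
      have : (s:ℂ) * (2 * Real.pi * Complex.I * n / s) = n * (2 * Real.pi * Complex.I) := by
        field_simp
      rw [this, Complex.exp_int_mul_two_pi_mul_I]
    calc ∑ m ∈ Finset.Icc 1 s, Complex.exp (2 * Real.pi * Complex.I * m * n / s)
        = ∑ m ∈ Finset.Icc 1 s, ζ ^ m := by exact Finset.sum_congr rfl fun m _ => hterm m
      _ = ∑ m ∈ Finset.Ico 1 (s+1), ζ ^ m := by rw [Finset.Ico_add_one_right_eq_Icc]
      _ = ∑ m ∈ Finset.range s, ζ ^ (1 + m) := by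
            rw [Finset.sum_Ico_eq_sum_range]; norm_num
      _ = ζ * ∑ m ∈ Finset.range s, ζ ^ m := by
            rw [Finset.mul_sum]; exact Finset.sum_congr rfl fun m _ => by rw [pow_add, pow_one]
      _ = 0 := by rw [geom_sum_eq hζ1, hζs]; simp

lemma cq_eq_sum_divisors_s15 (r : ℕ) (hr : 1 ≤ r) (n : ℤ) :
    cq r n = ∑ d ∈ r.divisors,
      ((ArithmeticFunction.moebius (r/d) : ℤ) : ℂ) * (if (d:ℤ) ∣ n then (d:ℂ) else 0) := by
  have hr0 : r ≠ 0 := by omega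
  have step1 : cq r n = ∑ j ∈ Finset.Icc 1 r,
      (if Nat.Coprime j r then Complex.exp (2 * Real.pi * Complex.I * j * n / r) else 0) := by
    rw [cq, Finset.sum_filter]
  have step2 : ∀ j ∈ Finset.Icc 1 r,
      (if Nat.Coprime j r then Complex.exp (2 * Real.pi * Complex.I * j * n / r) else 0)
        = ∑ e ∈ r.divisors.filter (· ∣ j), ((ArithmeticFunction.moebius e : ℤ) : ℂ) *
            Complex.exp (2 * Real.pi * Complex.I * j * n / r) := by
    intro j hj
    have hj1 : 1 ≤ j := (Finset.mem_Icc.mp hj).1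
    have hgcd0 : Nat.gcd j r ≠ 0 := Nat.gcd_ne_zero_left (by omega)
    have hset : r.divisors.filter (· ∣ j) = (Nat.gcd j r).divisors := by
      ext e
      simp only [Finset.mem_filter, Nat.mem_divisors]
      constructor
      · rintro ⟨⟨h1, h2⟩, h3⟩; exact ⟨Nat.dvd_gcd h3 h1, hgcd0⟩
      · rintro ⟨h1, h2⟩
        exact ⟨⟨h1.trans (Nat.gcd_dvd_right _ _), hr0⟩, h1.trans (Nat.gcd_dvd_left _ _)⟩
    rw [hset, ← Finset.sum_mul]
    have hcast : (∑ e ∈ (Nat.gcd j r).divisors, ((ArithmeticFunction.moebius e : ℤ) : ℂ))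
        = ((∑ e ∈ (Nat.gcd j r).divisors, (ArithmeticFunction.moebius e) : ℤ) : ℂ) := by
      push_cast; rfl
    rw [hcast, sum_moebius_divisors]
    by_cases h : Nat.gcd j r = 1
    · rw [if_pos h, if_pos h]; simp
    · rw [if_neg h, if_neg h]; simp
  rw [step1, Finset.sum_congr rfl step2]
  -- swap the order of summation
  rw [show ∀ (F : ℕ → ℕ → ℂ), ∑ j ∈ Finset.Icc 1 r, ∑ e ∈ r.divisors.filter (· ∣ j), F j e
      = ∑ e ∈ r.divisors, ∑ j ∈ (Finset.Icc 1 r).filter (fun j => e ∣ j), F j e from ?_]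
  · -- now compute inner sums
    have inner : ∀ e ∈ r.divisors,
        ∑ j ∈ (Finset.Icc 1 r).filter (fun j => e ∣ j),
          ((ArithmeticFunction.moebius e : ℤ) : ℂ) *
            Complex.exp (2 * Real.pi * Complex.I * j * n / r)
        = ((ArithmeticFunction.moebius e : ℤ) : ℂ) *
            (if ((r/e : ℕ):ℤ) ∣ n then ((r/e : ℕ):ℂ) else 0) := by
      intro e he
      rw [Nat.mem_divisors] at he
      rw [← Finset.mul_sum, inner_reindex r e he.1 hr0 n,
        expsum_eq (r/e) (Nat.div_pos (Nat.le_of_dvd (Nat.pos_of_ne_zero hr0) he.1)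
          (Nat.pos_of_ne_zero (by rintro rfl; exact hr0 (Nat.eq_zero_of_zero_dvd he.1)))) n]
    rw [Finset.sum_congr rfl inner]
    -- reindex d = r / e
    have := Nat.sum_div_divisors r (fun d => ((ArithmeticFunction.moebius (r/d) : ℤ) : ℂ) *
      (if (d:ℤ) ∣ n then (d:ℂ) else 0))
    rw [← this]
    apply Finset.sum_congr rfl
    intro e he
    rw [Nat.mem_divisors] at he
    rw [Nat.div_div_self he.1 hr0]
  · intro F
    rw [Finset.sum_congr rfl (fun j _ => Finset.sum_filter (· ∣ j) (F j)), Finset.sum_comm]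
    exact Finset.sum_congr rfl (fun e _ => (Finset.sum_filter _ _).symm)


lemma ediv_succ (L a : ℤ) (hL : 0 < L) :
    (a + 1) / L = a / L + (if L ∣ (a+1) then 1 else 0) := by
  by_cases h : L ∣ (a+1)
  · rw [if_pos h]
    obtain ⟨c, hc⟩ := h
    have h1 : (a+1)/L = c := by rw [hc, Int.mul_ediv_cancel_left _ (by omega)]
    have h2 : a/L = c - 1 := by
      rw [show a = (L-1) + (c-1)*L by linarith, Int.add_mul_ediv_right _ _ (by omega : L ≠ 0),
        Int.ediv_eq_zero_of_lt (by omega) (by omega)]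
      ring
    rw [h1, h2]; ring
  · rw [if_neg h, add_zero]
    set q := (a+1)/L with hq
    set rv := (a+1) % L with hrv
    have h1 : rv ≠ 0 := fun hc => h (Int.dvd_of_emod_eq_zero hc)
    have h2 : 0 ≤ rv := Int.emod_nonneg _ (by omega)
    have h3 : rv < L := Int.emod_lt_of_pos _ hL
    have h4 : a + 1 = L * q + rv := (Int.mul_ediv_add_emod _ _).symm
    have h5 : a / L = q := by
      rw [show a = (rv - 1) + q * L by linarith, Int.add_mul_ediv_right _ _ (by omega : L ≠ 0),
        Int.ediv_eq_zero_of_lt (by omega) (by omega)]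
      ring
    rw [h5]

lemma card_residue (N L : ℕ) (hL : 1 ≤ L) (ρ : ℤ) :
    (((Finset.Icc 1 N).filter (fun n : ℕ => (L:ℤ) ∣ (n:ℤ) - ρ)).card : ℤ)
      = ((N:ℤ) - ρ) / L - (0 - ρ) / L := by
  have hL' : (0:ℤ) < L := by exact_mod_cast hL
  induction N with
  | zero => simp
  | succ N ih =>
    have hins : Finset.Icc 1 (N+1) = insert (N+1) (Finset.Icc 1 N) := by
      ext a; simp only [Finset.mem_Icc, Finset.mem_insert]; omega
    rw [hins, Finset.filter_insert]
    have key := ediv_succ L ((N:ℤ) - ρ) hL'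
    by_cases h : (L:ℤ) ∣ ((N:ℤ)+1) - ρ
    · have h' : (L:ℤ) ∣ ((N:ℤ) - ρ) + 1 := by convert h using 1; ring
      rw [if_pos h'] at key
      have hnot : (N+1 : ℕ) ∉ (Finset.Icc 1 N).filter (fun n : ℕ => (L:ℤ) ∣ (n:ℤ) - ρ) := by
        simp
      rw [if_pos (show (L:ℤ) ∣ ((N+1:ℕ):ℤ) - ρ by push_cast; convert h using 1),
        Finset.card_insert_of_notMem hnot]
      push_cast
      rw [ih, show (N:ℤ) + 1 - ρ = ((N:ℤ) - ρ) + 1 by ring, key]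
      ring
    · have h' : ¬ (L:ℤ) ∣ ((N:ℤ) - ρ) + 1 := fun hc => h (by convert hc using 1; ring)
      rw [if_neg h'] at key
      rw [if_neg (show ¬ (L:ℤ) ∣ ((N+1:ℕ):ℤ) - ρ by push_cast; convert h using 1), ih]
      push_cast
      rw [show (N:ℤ) + 1 - ρ = ((N:ℤ) - ρ) + 1 by ring, key]
      ring

lemma ediv_real_bounds (L : ℕ) (hL : 1 ≤ L) (a : ℤ) :
    (a:ℝ)/L - 1 < ((a / (L:ℤ) : ℤ) : ℝ) ∧ ((a / (L:ℤ) : ℤ) : ℝ) ≤ (a:ℝ)/L := by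
  have h4 : a = L * (a/L) + a % L := (Int.mul_ediv_add_emod _ _).symm
  have h2 : 0 ≤ a % (L:ℤ) := Int.emod_nonneg _ (by exact_mod_cast (by omega : (L:ℤ) ≠ 0))
  have h3 : a % (L:ℤ) < L := Int.emod_lt_of_pos _ (by exact_mod_cast hL)
  have hLR : (0:ℝ) < L := by exact_mod_cast hL
  have hcast : (a:ℝ) = L * ((a/(L:ℤ) : ℤ):ℝ) + ((a % (L:ℤ) : ℤ):ℝ) := by exact_mod_cast h4
  constructor
  · rw [sub_lt_iff_lt_add, div_lt_iff₀ hLR]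
    nlinarith [show ((a % (L:ℤ) : ℤ):ℝ) < L by exact_mod_cast h3]
  · rw [le_div_iff₀ hLR]
    nlinarith [show (0:ℝ) ≤ ((a % (L:ℤ) : ℤ):ℝ) by exact_mod_cast h2]

lemma card_residue_real (N L : ℕ) (hL : 1 ≤ L) (ρ : ℤ) :
    |(((Finset.Icc 1 N).filter (fun n : ℕ => (L:ℤ) ∣ (n:ℤ) - ρ)).card : ℝ) - (N:ℝ) / L| ≤ 2 := by
  have hc := card_residue N L hL ρ
  have h1 := ediv_real_bounds L hL ((N:ℤ) - ρ)
  have h2 := ediv_real_bounds L hL (0 - ρ)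
  have hcr : (((Finset.Icc 1 N).filter (fun n : ℕ => (L:ℤ) ∣ (n:ℤ) - ρ)).card : ℝ)
      = ((((N:ℤ) - ρ) / L : ℤ) : ℝ) - (((0 - ρ) / L : ℤ) : ℝ) := by exact_mod_cast hc
  have hLR : (0:ℝ) < L := by exact_mod_cast hL
  have e1 : (((N:ℤ) - ρ : ℤ) : ℝ) / L = (N:ℝ)/L - (ρ:ℝ)/L := by push_cast; ring
  have e2 : ((0 - ρ : ℤ) : ℝ) / L = 0 - (ρ:ℝ)/L := by push_cast; ring
  rw [hcr, abs_le]
  constructor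
  · nlinarith [h1.1, h2.2]
  · nlinarith [h1.2, h2.1]


lemma mod_eq_iff_dvd_sub (a b q : ℤ) : a % q = b % q ↔ q ∣ b - a :=
  Int.modEq_iff_dvd

lemma filter_cong_empty (N q d : ℕ) (k : ℤ) (hk : ¬ ((Nat.gcd d q : ℤ) ∣ k)) :
    ((Finset.Icc 1 N).filter (fun n : ℕ => (n:ℤ) % q = k % q ∧ (d:ℤ) ∣ (n:ℤ))) = ∅ := by
  rw [Finset.filter_eq_empty_iff]
  intro n _
  rintro ⟨h1, h2⟩
  have hq : (q:ℤ) ∣ k - n := (mod_eq_iff_dvd_sub _ _ _).mp h1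
  have hgd : ((Nat.gcd d q : ℕ):ℤ) ∣ (d:ℤ) := Int.natCast_dvd_natCast.mpr (Nat.gcd_dvd_left d q)
  have hgq : ((Nat.gcd d q : ℕ):ℤ) ∣ (q:ℤ) := Int.natCast_dvd_natCast.mpr (Nat.gcd_dvd_right d q)
  have : ((Nat.gcd d q : ℕ):ℤ) ∣ k := by
    have h3 : ((Nat.gcd d q : ℕ):ℤ) ∣ k - n := hgq.trans hq
    have h4 : ((Nat.gcd d q : ℕ):ℤ) ∣ (n:ℤ) := hgd.trans h2
    have := dvd_add h3 h4
    simpa using this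
  exact hk this

lemma filter_cong_eq (N q d : ℕ) (k : ℤ) (hk : ((Nat.gcd d q : ℤ) ∣ k)) :
    ∃ ρ : ℤ, ((Finset.Icc 1 N).filter (fun n : ℕ => (n:ℤ) % q = k % q ∧ (d:ℤ) ∣ (n:ℤ)))
      = ((Finset.Icc 1 N).filter (fun n : ℕ => ((Nat.lcm d q : ℕ):ℤ) ∣ (n:ℤ) - ρ)) := by
  obtain ⟨c, hc⟩ := hk
  have hbez : ((Nat.gcd d q : ℕ):ℤ) = d * Int.gcdA d q + q * Int.gcdB d q := by
    have := Int.gcd_eq_gcd_ab (d:ℤ) (q:ℤ)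
    rwa [show Int.gcd (d:ℤ) (q:ℤ) = Nat.gcd d q from rfl] at this
  set u := Int.gcdA d q
  set v := Int.gcdB d q
  refine ⟨c * (d * u), ?_⟩
  have hd0 : (d:ℤ) ∣ c * (d * u) := ⟨c * u, by ring⟩
  have hq0 : (q:ℤ) ∣ c * (d * u) - k := ⟨-(c * v), by rw [hc, hbez]; ring⟩
  ext n
  simp only [Finset.mem_filter, Finset.mem_Icc]
  constructor
  · rintro ⟨hn, h1, h2⟩
    refine ⟨hn, ?_⟩
    have hqd : (q:ℤ) ∣ (n:ℤ) - c * (d * u) := by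
      have hkn : (q:ℤ) ∣ k - n := (mod_eq_iff_dvd_sub _ _ _).mp h1
      have he : (n:ℤ) - c * (d * u) = (k - n) * (-1) + (c * (d * u) - k) * (-1) := by ring
      rw [he]
      exact dvd_add (hkn.mul_right _) (hq0.mul_right _)
    have hdd : (d:ℤ) ∣ (n:ℤ) - c * (d * u) := dvd_sub h2 hd0
    have : ((Int.lcm (d:ℤ) (q:ℤ) : ℕ) : ℤ) ∣ (n:ℤ) - c * (d * u) := by
      rw [Int.coe_lcm]; exact lcm_dvd hdd hqd
    rwa [show Int.lcm (d:ℤ) (q:ℤ) = Nat.lcm d q from rfl] at this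
  · rintro ⟨hn, h⟩
    refine ⟨hn, ?_, ?_⟩
    · rw [mod_eq_iff_dvd_sub]
      have hql : (q:ℤ) ∣ ((Nat.lcm d q : ℕ):ℤ) := Int.natCast_dvd_natCast.mpr (Nat.dvd_lcm_right d q)
      have h6 : (q:ℤ) ∣ (n:ℤ) - c * (d * u) := hql.trans h
      have he : k - (n:ℤ) = (c * (d * u) - k) * (-1) + ((n:ℤ) - c * (d * u)) * (-1) := by ring
      rw [he]
      exact dvd_add (hq0.mul_right _) (h6.mul_right _)
    · have hdl : (d:ℤ) ∣ ((Nat.lcm d q : ℕ):ℤ) := Int.natCast_dvd_natCast.mpr (Nat.dvd_lcm_left d q)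
      have h6 : (d:ℤ) ∣ (n:ℤ) - c * (d * u) := hdl.trans h
      have := dvd_add h6 hd0
      simpa using this


noncomputable def Hfun (q : ℕ) (k : ℤ) : ArithmeticFunction ℤ :=
  ⟨fun d => if d = 0 then 0 else if (Nat.gcd d q : ℤ) ∣ k then (Nat.gcd d q : ℤ) else 0, rfl⟩

lemma Hfun_apply (q : ℕ) (k : ℤ) (d : ℕ) (hd : d ≠ 0) :
    Hfun q k d = if (Nat.gcd d q : ℤ) ∣ k then (Nat.gcd d q : ℤ) else 0 := by
  simp [Hfun, hd, ArithmeticFunction.coe_mk]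

lemma Hfun_mult (q : ℕ) (k : ℤ) : (Hfun q k).IsMultiplicative := by
  constructor
  · simp [Hfun, ArithmeticFunction.coe_mk]
  · intro m n h
    rcases eq_or_ne m 0 with rfl | hm
    · have : n = 1 := by simpa [Nat.coprime_zero_left] using h
      subst this
      simp [Hfun, ArithmeticFunction.coe_mk]
    rcases eq_or_ne n 0 with rfl | hn
    · have : m = 1 := by simpa [Nat.coprime_zero_right] using h
      subst this
      simp [Hfun, ArithmeticFunction.coe_mk]
    have hmn : m * n ≠ 0 := Nat.mul_ne_zero hm hn
    rw [Hfun_apply _ _ _ hmn, Hfun_apply _ _ _ hm, Hfun_apply _ _ _ hn]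
    have hgcd : Nat.gcd (m * n) q = Nat.gcd m q * Nat.gcd n q := by
      rw [Nat.gcd_comm (m*n) q, Nat.gcd_comm m q, Nat.gcd_comm n q]
      exact Nat.Coprime.gcd_mul q h
    have hcop : Nat.Coprime (Nat.gcd m q) (Nat.gcd n q) :=
      Nat.Coprime.coprime_dvd_left (Nat.gcd_dvd_left m q)
        (Nat.Coprime.coprime_dvd_right (Nat.gcd_dvd_left n q) h)
    have hiff : ((Nat.gcd (m*n) q : ℤ) ∣ k) ↔ ((Nat.gcd m q : ℤ) ∣ k ∧ (Nat.gcd n q : ℤ) ∣ k) := by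
      rw [hgcd]
      push_cast
      constructor
      · intro hdvd
        exact ⟨(dvd_mul_right _ _).trans hdvd, (dvd_mul_left _ _).trans hdvd⟩
      · rintro ⟨h1, h2⟩
        have hic : IsCoprime ((Nat.gcd m q : ℤ)) ((Nat.gcd n q : ℤ)) := by
          rw [Int.isCoprime_iff_gcd_eq_one]
          exact_mod_cast hcop
        exact hic.mul_dvd h1 h2
    by_cases h1 : (Nat.gcd m q : ℤ) ∣ k <;> by_cases h2 : (Nat.gcd n q : ℤ) ∣ k
    · rw [if_pos (hiff.mpr ⟨h1, h2⟩), if_pos h1, if_pos h2, hgcd]; push_cast; ring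
    · rw [if_neg (fun hc => h2 (hiff.mp hc).2), if_pos h1, if_neg h2, mul_zero]
    · rw [if_neg (fun hc => h1 (hiff.mp hc).1), if_neg h1, if_pos h2, zero_mul]
    · rw [if_neg (fun hc => h1 (hiff.mp hc).1), if_neg h1, if_neg h2, mul_zero]

lemma T_eq_zero (r q : ℕ) (hq : 1 ≤ q) (hr : 2 ≤ r) (hndvd : ¬ r ∣ q) (k : ℤ) :
    ∑ d ∈ r.divisors, (ArithmeticFunction.moebius (r/d) : ℤ) *
      (if (Nat.gcd d q : ℤ) ∣ k then (Nat.gcd d q : ℤ) else 0) = 0 := by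
  have hr0 : r ≠ 0 := by omega
  have hq0 : q ≠ 0 := by omega
  -- rewrite as Dirichlet convolution
  have hconv : ∑ d ∈ r.divisors, (ArithmeticFunction.moebius (r/d) : ℤ) *
      (if (Nat.gcd d q : ℤ) ∣ k then (Nat.gcd d q : ℤ) else 0)
      = (ArithmeticFunction.moebius * Hfun q k) r := by
    rw [ArithmeticFunction.mul_apply,
      Nat.sum_divisorsAntidiagonal' (fun a b => ArithmeticFunction.moebius a * Hfun q k b)]
    apply Finset.sum_congr rfl
    intro d hd
    rw [Nat.mem_divisors] at hd
    rw [Hfun_apply q k d (by rintro rfl; exact hr0 (Nat.eq_zero_of_zero_dvd hd.1))]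
  rw [hconv]
  -- find the critical prime
  have hex : ∃ p, ¬ (r.factorization p ≤ q.factorization p) := by
    by_contra hc
    push_neg at hc
    exact hndvd ((Nat.factorization_le_iff_dvd hr0 hq0).mp (fun p => hc p))
  obtain ⟨p, hp⟩ := hex
  have hpp : p.Prime := by
    have h0 : r.factorization p ≠ 0 := fun h => hp (by simp [h])
    exact Nat.prime_of_mem_primeFactors
      (by rw [← Nat.support_factorization]; exact Finsupp.mem_support_iff.mpr h0)
  set a := r.factorization p with ha
  have hva : q.factorization p < a := by omega
  have ha1 : 1 ≤ a := by omega
  set s := r / p ^ a with hs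
  have hrs : p ^ a * s = r := Nat.ordProj_mul_ordCompl_eq_self r p
  have hcop : Nat.Coprime (p ^ a) s := Nat.Coprime.pow_left a (Nat.coprime_ordCompl hpp hr0)
  have hmult : (ArithmeticFunction.moebius * Hfun q k).IsMultiplicative :=
    ArithmeticFunction.isMultiplicative_moebius.mul (Hfun_mult q k)
  rw [← hrs, hmult.map_mul_of_coprime hcop]
  have hppow : (ArithmeticFunction.moebius * Hfun q k) (p ^ a) = 0 := by
    rw [ArithmeticFunction.mul_apply,
      Nat.sum_divisorsAntidiagonal' (fun x y => ArithmeticFunction.moebius x * Hfun q k y),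
      Nat.sum_divisors_prime_pow hpp]
    have hsub : ({a - 1, a} : Finset ℕ) ⊆ Finset.range (a + 1) := by
      intro x hx
      simp only [Finset.mem_insert, Finset.mem_singleton] at hx
      rcases hx with rfl | rfl <;> simp [Finset.mem_range] <;> omega
    rw [← Finset.sum_subset hsub ?hzero]
    · rw [Finset.sum_pair (by omega : a - 1 ≠ a)]
      have hpd1 : p ^ a / p ^ (a-1) = p := by
        rw [Nat.pow_div (by omega) hpp.pos, show a - (a-1) = 1 by omega, pow_one]
      have hpd2 : p ^ a / p ^ a = 1 := by
        rw [Nat.pow_div le_rfl hpp.pos]; simp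
      have hgeq : Nat.gcd (p^a) q = Nat.gcd (p^(a-1)) q := by
        apply Nat.dvd_antisymm
        · obtain ⟨i, hi, hieq⟩ := (Nat.dvd_prime_pow hpp).mp (Nat.gcd_dvd_left (p^a) q)
          have hiq : p^i ∣ q := hieq ▸ Nat.gcd_dvd_right (p^a) q
          have hile : i ≤ q.factorization p := (hpp.pow_dvd_iff_le_factorization hq0).mp hiq
          exact Nat.dvd_gcd (hieq ▸ pow_dvd_pow p (by omega)) (Nat.gcd_dvd_right _ _)
        · exact Nat.dvd_gcd ((Nat.gcd_dvd_left _ _).trans (pow_dvd_pow p (by omega)))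
            (Nat.gcd_dvd_right _ _)
      rw [hpd1, hpd2, ArithmeticFunction.moebius_apply_one,
        ArithmeticFunction.moebius_apply_prime hpp,
        Hfun_apply q k _ (pow_ne_zero _ hpp.ne_zero),
        Hfun_apply q k _ (pow_ne_zero _ hpp.ne_zero), hgeq]
      ring
    · intro i hi hni
      simp only [Finset.mem_range] at hi
      simp only [Finset.mem_insert, Finset.mem_singleton] at hni
      push_neg at hni
      have h2 : 2 ≤ a - i := by omega
      rw [Nat.pow_div (by omega) hpp.pos,
        ArithmeticFunction.moebius_apply_prime_pow hpp (by omega), if_neg (by omega)]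
      ring
  rw [hppow, zero_mul]


lemma SN_expand (N q r : ℕ) (hr : 1 ≤ r) (k : ℤ) :
    SN N q k r = ∑ d ∈ r.divisors, ((ArithmeticFunction.moebius (r/d) : ℤ) : ℂ) *
      ((((Finset.Icc 1 N).filter
          (fun n : ℕ => (n:ℤ) % q = k % q ∧ (d:ℤ) ∣ (n:ℤ))).card : ℂ) * d) := by
  rw [SN]
  have h1 : ∀ n ∈ (Finset.Icc 1 N).filter (fun n : ℕ => (n:ℤ) % q = k % q),
      cq r (n:ℤ) = ∑ d ∈ r.divisors,
        ((ArithmeticFunction.moebius (r/d) : ℤ) : ℂ) * (if (d:ℤ) ∣ (n:ℤ) then ((d:ℕ):ℂ) else 0) :=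
    fun n _ => cq_eq_sum_divisors_s15 r hr n
  rw [Finset.sum_congr rfl h1, Finset.sum_comm]
  apply Finset.sum_congr rfl
  intro d hd
  rw [← Finset.mul_sum]
  congr 1
  rw [← Finset.sum_filter, Finset.filter_filter, Finset.sum_const, nsmul_eq_mul]

lemma abs_moebius_le_one (n : ℕ) : |(ArithmeticFunction.moebius n : ℝ)| ≤ 1 := by
  by_cases hsq : Squarefree n
  · rw [ArithmeticFunction.moebius_apply_of_squarefree hsq]
    push_cast
    rw [abs_pow, abs_neg, abs_one, one_pow]
  · rw [ArithmeticFunction.moebius_eq_zero_of_not_squarefree hsq]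
    simp

lemma sigma_le (r : ℕ) (hr : 1 ≤ r) :
    ∑ d ∈ r.divisors, (d:ℝ) ≤ r * (1 + Real.log r) := by
  have h1 : ∑ d ∈ r.divisors, (d:ℝ) = ∑ d ∈ r.divisors, ((r/d : ℕ):ℝ) :=
    (Nat.sum_div_divisors r (fun d => (d:ℝ))).symm
  have h2 : ∀ d ∈ r.divisors, ((r/d : ℕ):ℝ) = (r:ℝ)/(d:ℝ) := by
    intro d hd
    rw [Nat.mem_divisors] at hd
    have hd0 : d ≠ 0 := by rintro rfl; exact hd.2 (Nat.eq_zero_of_zero_dvd hd.1)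
    rw [Nat.cast_div hd.1 (Nat.cast_ne_zero.mpr hd0)]
  rw [h1, Finset.sum_congr rfl h2]
  have hsub : r.divisors ⊆ Finset.Icc 1 r := by
    intro d hd
    rw [Nat.mem_divisors] at hd
    have hd0 : d ≠ 0 := by rintro rfl; exact hd.2 (Nat.eq_zero_of_zero_dvd hd.1)
    rw [Finset.mem_Icc]
    exact ⟨by omega, Nat.le_of_dvd (by omega) hd.1⟩
  have h3 : ∑ d ∈ r.divisors, (r:ℝ)/(d:ℝ) ≤ ∑ d ∈ Finset.Icc 1 r, (r:ℝ)/(d:ℝ) := by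
    apply Finset.sum_le_sum_of_subset_of_nonneg hsub
    intro d _ _
    positivity
  refine h3.trans ?_
  have h4 : ∑ d ∈ Finset.Icc 1 r, (r:ℝ)/(d:ℝ) = (r:ℝ) * ∑ d ∈ Finset.Icc 1 r, ((d:ℝ))⁻¹ := by
    rw [Finset.mul_sum]
    exact Finset.sum_congr rfl (fun d _ => div_eq_mul_inv _ _)
  rw [h4]
  have h5 : ∑ d ∈ Finset.Icc 1 r, ((d:ℝ))⁻¹ = ((harmonic r : ℚ) : ℝ) := by
    rw [harmonic_eq_sum_Icc]
    push_cast
    rfl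
  rw [h5]
  have h6 := harmonic_le_one_add_log r
  have hr0 : (0:ℝ) ≤ r := by positivity
  nlinarith [h6]

/-- if `r ≥ 2` and `r ∤ q` then `S_N(q,k;r) ≪ r log r`. -/
theorem stmt15 : ∃ K : ℝ, ∀ q r N : ℕ, 1 ≤ q → 2 ≤ r → 1 ≤ N → ¬ r ∣ q → ∀ k : ℤ,
    ‖SN N q k r‖ ≤ K * r * Real.log r := by
  refine ⟨5, ?_⟩
  intro q r N hq hr2 hN hndvd k
  have hr1 : 1 ≤ r := by omega
  have hr0 : r ≠ 0 := by omega
  have hq0 : q ≠ 0 := by omega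
  have hqR : (0:ℝ) < q := by exact_mod_cast Nat.pos_of_ne_zero hq0
  -- real version of SN
  have hSN : SN N q k r = ((∑ d ∈ r.divisors, (ArithmeticFunction.moebius (r/d) : ℝ) *
      (((((Finset.Icc 1 N).filter
        (fun n : ℕ => (n:ℤ) % q = k % q ∧ (d:ℤ) ∣ (n:ℤ))).card : ℝ)) * d) : ℝ) : ℂ) := by
    rw [SN_expand N q r hr1 k]
    push_cast
    rfl
  rw [hSN, Complex.norm_real, Real.norm_eq_abs]
  set Ac : ℕ → ℝ := fun d => (((Finset.Icc 1 N).filter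
      (fun n : ℕ => (n:ℤ) % q = k % q ∧ (d:ℤ) ∣ (n:ℤ))).card : ℝ) with hAc
  set hR : ℕ → ℝ := fun d => if (Nat.gcd d q : ℤ) ∣ k then ((Nat.gcd d q : ℕ):ℝ) else 0 with hhR
  -- the main terms cancel
  have hTR : ∑ d ∈ r.divisors, (ArithmeticFunction.moebius (r/d) : ℝ) * hR d = 0 := by
    have h0 := T_eq_zero r q hq hr2 hndvd k
    have h1 := congrArg (fun z : ℤ => (z : ℝ)) h0
    push_cast [apply_ite (fun z : ℤ => (z:ℝ))] at h1
    convert h1 using 1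
  have hsplit : ∑ d ∈ r.divisors, (ArithmeticFunction.moebius (r/d) : ℝ) * (Ac d * d)
      = ∑ d ∈ r.divisors, (ArithmeticFunction.moebius (r/d) : ℝ) *
          (Ac d * d - ((N:ℝ)/q) * hR d)
        + ((N:ℝ)/q) * ∑ d ∈ r.divisors, (ArithmeticFunction.moebius (r/d) : ℝ) * hR d := by
    rw [Finset.mul_sum, ← Finset.sum_add_distrib]
    apply Finset.sum_congr rfl
    intro d _
    ring
  rw [hsplit, hTR, mul_zero, add_zero]
  -- bound termwise
  have hterm : ∀ d ∈ r.divisors,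
      |(ArithmeticFunction.moebius (r/d) : ℝ) * (Ac d * d - ((N:ℝ)/q) * hR d)| ≤ 2 * d := by
    intro d hd
    rw [Nat.mem_divisors] at hd
    have hd0 : d ≠ 0 := by rintro rfl; exact hd.2 (Nat.eq_zero_of_zero_dvd hd.1)
    have hd1 : 1 ≤ d := by omega
    rw [abs_mul]
    have hmu := abs_moebius_le_one (r/d)
    have hbound : |Ac d * d - ((N:ℝ)/q) * hR d| ≤ 2 * d := by
      by_cases hgk : (Nat.gcd d q : ℤ) ∣ k
      · -- solvable case
        obtain ⟨ρ, hfe⟩ := filter_cong_eq N q d k hgk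
        set L := Nat.lcm d q with hL
        have hL1 : 1 ≤ L := Nat.pos_of_ne_zero (Nat.lcm_ne_zero hd0 hq0)
        have hLR : (0:ℝ) < L := by exact_mod_cast hL1
        have hcard := card_residue_real N L hL1 ρ
        have hAcd : Ac d = (((Finset.Icc 1 N).filter
            (fun n : ℕ => ((L:ℕ):ℤ) ∣ (n:ℤ) - ρ)).card : ℝ) := by
          rw [hAc]; simp only; rw [hfe]
        have hgl : ((Nat.gcd d q : ℕ):ℝ) * (L:ℝ) = (d:ℝ) * (q:ℝ) := by
          exact_mod_cast congrArg (Nat.cast : ℕ → ℝ) (Nat.gcd_mul_lcm d q)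
        have hmain : ((N:ℝ)/q) * hR d = (d:ℝ) * ((N:ℝ)/L) := by
          rw [hhR]
          simp only [if_pos hgk]
          field_simp
          nlinarith [hgl]
        rw [hAcd, hmain]
        have heq : (((Finset.Icc 1 N).filter
              (fun n : ℕ => ((L:ℕ):ℤ) ∣ (n:ℤ) - ρ)).card : ℝ) * d - (d:ℝ) * ((N:ℝ)/L)
            = (d:ℝ) * ((((Finset.Icc 1 N).filter
              (fun n : ℕ => ((L:ℕ):ℤ) ∣ (n:ℤ) - ρ)).card : ℝ) - (N:ℝ)/L) := by ring
        rw [heq, abs_mul, abs_of_nonneg (by positivity : (0:ℝ) ≤ (d:ℝ))]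
        calc (d:ℝ) * |_| ≤ (d:ℝ) * 2 := by
              exact mul_le_mul_of_nonneg_left hcard (by positivity)
          _ = 2 * d := by ring
      · -- empty case
        have hempty := filter_cong_empty N q d k hgk
        have hAcd : Ac d = 0 := by rw [hAc]; simp only; rw [hempty]; simp
        have hRd : hR d = 0 := by rw [hhR]; simp only [if_neg hgk]
        rw [hAcd, hRd, zero_mul, mul_zero, sub_zero, abs_zero]
        positivity
    calc |(ArithmeticFunction.moebius (r/d) : ℝ)| * |Ac d * d - ((N:ℝ)/q) * hR d|
        ≤ 1 * (2 * d) := by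
          apply mul_le_mul hmu hbound (abs_nonneg _) zero_le_one
      _ = 2 * d := by ring
  calc |∑ d ∈ r.divisors, (ArithmeticFunction.moebius (r/d) : ℝ) *
        (Ac d * d - ((N:ℝ)/q) * hR d)|
      ≤ ∑ d ∈ r.divisors, |(ArithmeticFunction.moebius (r/d) : ℝ) *
        (Ac d * d - ((N:ℝ)/q) * hR d)| := Finset.abs_sum_le_sum_abs _ _
    _ ≤ ∑ d ∈ r.divisors, (2 * (d:ℝ)) := Finset.sum_le_sum hterm
    _ = 2 * ∑ d ∈ r.divisors, (d:ℝ) := by rw [Finset.mul_sum]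
    _ ≤ 2 * ((r:ℝ) * (1 + Real.log r)) := by
        have := sigma_le r hr1
        linarith
    _ ≤ 5 * r * Real.log r := by
        have hlog2 : (0.6931471803:ℝ) < Real.log 2 := Real.log_two_gt_d9
        have hrR : (2:ℝ) ≤ (r:ℝ) := by exact_mod_cast hr2
        have hlogr : Real.log 2 ≤ Real.log r := Real.log_le_log (by norm_num) hrR
        nlinarith [hlog2, hlogr, hrR]
end

section
/- Let q, r, N ∈ ℕ with gcd(q, r) = 1 and let k ∈ ℤ. Let q', r' ∈ ℕ satisfy r r' ≡ 1 (mod q) and q q' ≡ 1 (mod r), and write N = Q q r + R with Q, R nonnegative integers and 0 ≤ R < q r. For 1 ≤ t ≤ r define ν_N(t,k) = 1 if there exists an integer n with 1 ≤ n ≤ R and n ≡ k r' r + t q' q (mod q r), and ν_N(t,k) = 0 otherwise. Then S_N(q,k;r) = ∑_{t=1}^{r} c_r(t) (⌊N/(qr)⌋ + ν_N(t,k)); moreover this equals ⌊N/q⌋ + ν_N(1,k) if r = 1, and equals ∑_{t=1}^{r} c_r(t) ν_N(t,k) if r ≥ 2. -/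
open Finset

/-! With `a_t = k r' r + t q' q`, the Chinese remainder theorem turns the two conditions
`n ≡ k (mod q)` and `n ≡ t (mod r)` into the single condition `n ≡ a_t (mod qr)`.
Since `c_r` is `r`-periodic, `S_N(q,k;r)` is `∑_{t ≤ r} c_r(t)` times the number of `n ≤ N` with
`n ≡ a_t (mod qr)`; each of the `Q` complete blocks of length `qr` contributes one such `n`, and
the remaining `R` integers contribute `ν_N(t,k)`. For `r ≥ 2` the `Q`-part vanishes, because
`∑_{t ≤ r} c_r(t)` is a sum of complete sums of nontrivial `r`-th roots of unity. -/

theorem Function.Periodic.eq_of_intModEq {β : Type*} {f : ℤ → β} {c : ℤ}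
    (hf : Function.Periodic f c) {m n : ℤ} (h : m ≡ n [ZMOD c]) : f m = f n := by
  obtain ⟨t, rfl⟩ := Int.modEq_iff_add_fac.1 h
  rw [mul_comm]
  exact (hf.int_mul t m).symm

theorem cq_periodic (r : ℕ) : Function.Periodic (cq r) r := by
  intro n
  rcases Nat.eq_zero_or_pos r with rfl | hr
  · simp
  refine sum_congr rfl fun j _ => ?_
  have hr0 : (r : ℂ) ≠ 0 := by exact_mod_cast hr.ne'
  rw [show 2 * Real.pi * Complex.I * j * ((n + r : ℤ) : ℂ) / r
      = 2 * Real.pi * Complex.I * j * n / r + (j : ℤ) * (2 * Real.pi * Complex.I) by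
    push_cast; field_simp, Complex.exp_add, Complex.exp_int_mul_two_pi_mul_I, mul_one]

theorem cq_one (n : ℤ) : cq 1 n = 1 := by
  rw [cq, show (Icc 1 1).filter (fun j => Nat.Coprime j 1) = {1} by decide, sum_singleton]
  convert Complex.exp_int_mul_two_pi_mul_I n using 2
  push_cast
  ring

theorem sum_Icc_cq_eq_zero {r : ℕ} (hr : 2 ≤ r) : ∑ t ∈ Icc 1 r, cq r t = 0 := by
  unfold cq
  rw [sum_comm]
  refine sum_eq_zero fun j hj => ?_
  have hζ := Complex.isPrimitiveRoot_exp_of_coprime j r (by omega) (mem_filter.1 hj).2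
  set ζ := Complex.exp (2 * Real.pi * Complex.I * (j / r))
  calc ∑ t ∈ Icc 1 r, Complex.exp (2 * Real.pi * Complex.I * j * (t : ℤ) / r)
      = ∑ t ∈ range r, ζ * ζ ^ t := by
        rw [← Ico_add_one_right_eq_Icc, sum_Ico_eq_sum_range, Nat.add_sub_cancel]
        refine sum_congr rfl fun t _ => ?_
        rw [← pow_succ', ← Complex.exp_nat_mul]
        push_cast; ring_nf
    _ = 0 := by rw [← mul_sum, hζ.geom_sum_eq_zero (by omega), mul_zero]

section ResidueCount

variable {M : ℤ} (a : ℤ)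

theorem card_filter_modEq_Ioc_add_mul (hM : 0 < M) {L U : ℤ} (hLU : L ≤ U) (Q : ℕ) :
    #{x ∈ Ioc L (U + Q * M) | x ≡ a [ZMOD M]} = #{x ∈ Ioc L U | x ≡ a [ZMOD M]} + Q := by
  have hM' : (0 : ℚ) < M := by exact_mod_cast hM
  rw [← Nat.cast_inj (R := ℤ), Nat.cast_add, Int.Ioc_filter_modEq_card _ _ hM,
    Int.Ioc_filter_modEq_card _ _ hM]
  have hshift : ⌊((U + Q * M : ℤ) - a : ℚ) / M⌋ = ⌊((U : ℚ) - a) / M⌋ + Q := by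
    rw [← Int.floor_add_natCast]
    congr 1
    push_cast
    field_simp
    ring
  have hmono : ⌊((L : ℚ) - a) / M⌋ ≤ ⌊((U : ℚ) - a) / M⌋ :=
    Int.floor_mono (by gcongr)
  rw [hshift]
  omega

theorem card_filter_modEq_Ioc_add (hM : 0 < M) (L : ℤ) :
    #{x ∈ Ioc L (L + M) | x ≡ a [ZMOD M]} = 1 := by
  simpa using card_filter_modEq_Ioc_add_mul a hM le_rfl 1

theorem card_filter_modEq_Ioc_le_one {L U : ℤ} (hU : U ≤ L + M) :
    #{x ∈ Ioc L U | x ≡ a [ZMOD M]} ≤ 1 := by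
  refine card_le_one.2 fun x hx y hy => ?_
  simp only [mem_filter, mem_Ioc] at hx hy
  have := Int.eq_zero_of_abs_lt_dvd (hx.2.trans hy.2.symm).dvd
    (abs_sub_lt_iff.2 ⟨by omega, by omega⟩)
  omega

open Classical in
theorem card_filter_modEq_Ioc_zero_of_le {U : ℤ} (hU : U ≤ M) :
    #{x ∈ Ioc 0 U | x ≡ a [ZMOD M]} = if ∃ x : ℤ, 1 ≤ x ∧ x ≤ U ∧ M ∣ x - a then 1 else 0 := by
  have hmem : ∀ x, x ∈ {x ∈ Ioc 0 U | x ≡ a [ZMOD M]} ↔ 1 ≤ x ∧ x ≤ U ∧ M ∣ x - a := by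
    intro x
    rw [mem_filter, mem_Ioc, Int.modEq_comm, Int.modEq_iff_dvd]
    omega
  split_ifs with h
  · obtain ⟨x, hx⟩ := h
    exact le_antisymm (card_filter_modEq_Ioc_le_one a (by omega))
      (card_pos.2 ⟨x, (hmem x).2 hx⟩)
  · exact card_eq_zero.2 (eq_empty_of_forall_notMem fun x hx => h ⟨x, (hmem x).1 hx⟩)

theorem card_filter_natCast_modEq_Ioc (L U : ℕ) :
    #((Ioc L U).filter fun n : ℕ => (n : ℤ) ≡ a [ZMOD M]) =
      #{x ∈ Ioc (L : ℤ) U | x ≡ a [ZMOD M]} := by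
  rw [← card_map (Nat.castEmbedding : ℕ ↪ ℤ)]
  congr 1
  ext x
  simp only [mem_map, mem_filter, mem_Ioc, Nat.castEmbedding_apply]
  constructor
  · rintro ⟨n, ⟨⟨hLn, hnU⟩, hn⟩, rfl⟩
    exact ⟨⟨by omega, by omega⟩, hn⟩
  · rintro ⟨⟨hLx, hxU⟩, hx⟩
    lift x to ℕ using by omega
    exact ⟨x, ⟨⟨by omega, by omega⟩, hx⟩, rfl⟩

end ResidueCount

theorem sum_eq_sum_Icc_card_nsmul_of_periodic {β : Type*} [AddCommMonoid β] {f : ℤ → β}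
    {r : ℕ} (hr : 0 < r) (hf : Function.Periodic f r) (s : Finset ℕ) :
    ∑ n ∈ s, f n = ∑ t ∈ Icc 1 r, #(s.filter fun n : ℕ => (n : ℤ) ≡ t [ZMOD r]) • f t := by
  have hclass : ∀ n : ℕ, #((Icc 1 r).filter fun t : ℕ => (n : ℤ) ≡ t [ZMOD r]) = 1 := fun n => by
    simp_rw [Int.modEq_comm (a := (n : ℤ))]
    rw [show Icc 1 r = Ioc 0 r from Icc_add_one_left_eq_Ioc 0 r, card_filter_natCast_modEq_Ioc]
    simpa using card_filter_modEq_Ioc_add (n : ℤ) (M := r) (by omega) 0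
  calc ∑ n ∈ s, f n = ∑ n ∈ s, #((Icc 1 r).filter fun t : ℕ => (n : ℤ) ≡ t [ZMOD r]) • f n := by
        simp only [hclass, one_smul]
    _ = ∑ n ∈ s, ∑ t ∈ (Icc 1 r).filter fun t : ℕ => (n : ℤ) ≡ t [ZMOD r], f t := by
        refine sum_congr rfl fun n _ => ?_
        rw [← sum_const]
        exact sum_congr rfl fun t ht => hf.eq_of_intModEq (mem_filter.1 ht).2
    _ = ∑ t ∈ Icc 1 r, ∑ n ∈ s.filter fun n : ℕ => (n : ℤ) ≡ t [ZMOD r], f t :=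
        sum_comm' fun n t => by simp only [mem_filter]; tauto
    _ = ∑ t ∈ Icc 1 r, #(s.filter fun n : ℕ => (n : ℤ) ≡ t [ZMOD r]) • f t := by
        simp only [sum_const]

theorem modEq_and_modEq_iff_modEq_mul_of_inv {q r q' r' : ℕ} (hqr : q.Coprime r)
    (hr' : r * r' ≡ 1 [MOD q]) (hq' : q * q' ≡ 1 [MOD r]) (n k t : ℤ) :
    n ≡ k [ZMOD q] ∧ n ≡ t [ZMOD r] ↔ n ≡ k * r' * r + t * q' * q [ZMOD q * r] := by
  have hr'' : (r * r' : ℤ) ≡ 1 [ZMOD q] := by exact_mod_cast Int.natCast_modEq_iff.2 hr'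
  have hq'' : (q * q' : ℤ) ≡ 1 [ZMOD r] := by exact_mod_cast Int.natCast_modEq_iff.2 hq'
  have hk : k * r' * r + t * q' * q ≡ k [ZMOD q] :=
    calc k * r' * r + t * q' * q = k * (r * r') + t * q' * q := by ring
      _ ≡ k * 1 + 0 [ZMOD q] :=
        (hr''.mul_left k).add (Int.modEq_zero_iff_dvd.2 (dvd_mul_left _ _))
      _ = k := by ring
  have ht : k * r' * r + t * q' * q ≡ t [ZMOD r] :=
    calc k * r' * r + t * q' * q = k * r' * r + t * (q * q') := by ring
      _ ≡ 0 + t * 1 [ZMOD r] :=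
        (Int.modEq_zero_iff_dvd.2 (dvd_mul_left _ _)).add (hq''.mul_left t)
      _ = t := by ring
  rw [← Int.modEq_and_modEq_iff_modEq_mul (by simpa using hqr)]
  exact and_congr ⟨fun h => h.trans hk.symm, fun h => h.trans hk⟩
    ⟨fun h => h.trans ht.symm, fun h => h.trans ht⟩

theorem card_filter_Icc_modEq_modEq {q r q' r' : ℕ} (hqr : q.Coprime r)
    (hr' : r * r' ≡ 1 [MOD q]) (hq' : q * q' ≡ 1 [MOD r]) (hM : 0 < q * r) {Q R : ℕ} (k t : ℤ) :
    #(((Icc 1 (Q * q * r + R)).filter fun n : ℕ => (n : ℤ) ≡ k [ZMOD q]).filter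
      fun n : ℕ => (n : ℤ) ≡ t [ZMOD r]) =
      Q + #{x ∈ Ioc 0 (R : ℤ) | x ≡ k * r' * r + t * q' * q [ZMOD q * r]} := by
  have hN : ((Q * q * r + R : ℕ) : ℤ) = R + Q * (q * r) := by push_cast; ring
  rw [filter_filter,
    filter_congr fun (n : ℕ) _ => modEq_and_modEq_iff_modEq_mul_of_inv hqr hr' hq' n k t,
    show Icc 1 (Q * q * r + R) = Ioc 0 (Q * q * r + R) from Icc_add_one_left_eq_Ioc 0 _,
    card_filter_natCast_modEq_Ioc, hN, card_filter_modEq_Ioc_add_mul _ (by exact_mod_cast hM)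
    (by positivity), Nat.cast_zero, add_comm]

theorem stmt16_general (q r N : ℕ) (hq : 1 ≤ q) (hr : 1 ≤ r)
    (hqr : Nat.Coprime q r) (k : ℤ) (q' r' : ℕ)
    (hr' : r * r' ≡ 1 [MOD q]) (hq' : q * q' ≡ 1 [MOD r])
    (Q R : ℕ) (hNQR : N = Q * q * r + R) (hRlt : R < q * r)
    (ν : ℕ → ℕ)
    (hν1 : ∀ t : ℕ, (∃ n : ℤ, 1 ≤ n ∧ n ≤ (R : ℤ) ∧
      ((q : ℤ) * r) ∣ (n - (k * r' * r + t * q' * q))) → ν t = 1)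
    (hν0 : ∀ t : ℕ, ¬ (∃ n : ℤ, 1 ≤ n ∧ n ≤ (R : ℤ) ∧
      ((q : ℤ) * r) ∣ (n - (k * r' * r + t * q' * q))) → ν t = 0) :
    SN N q k r = ∑ t ∈ Finset.Icc 1 r, cq r (t : ℤ) * ((Q : ℂ) + (ν t : ℂ)) ∧
    (r = 1 → SN N q k r = ((N / q : ℕ) : ℂ) + (ν 1 : ℂ)) ∧
    (2 ≤ r → SN N q k r = ∑ t ∈ Finset.Icc 1 r, cq r (t : ℤ) * (ν t : ℂ)) := by
  have hν : ∀ t : ℕ, ν t = #{x ∈ Ioc 0 (R : ℤ) | x ≡ k * r' * r + t * q' * q [ZMOD q * r]} := by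
    intro t
    rw [card_filter_modEq_Ioc_zero_of_le _ (by exact_mod_cast hRlt.le)]
    split_ifs with h
    exacts [hν1 t h, hν0 t h]
  have hcount : ∀ t : ℕ, #(((Icc 1 N).filter fun n : ℕ => (n : ℤ) % q = k % q).filter
      fun n : ℕ => (n : ℤ) ≡ t [ZMOD r]) = Q + ν t := fun t => by
    rw [hν t, hNQR]
    exact card_filter_Icc_modEq_modEq hqr hr' hq' (by positivity) k t
  have hmain : SN N q k r = ∑ t ∈ Icc 1 r, cq r t * (Q + ν t) := by
    rw [SN, sum_eq_sum_Icc_card_nsmul_of_periodic hr (cq_periodic r)]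
    refine sum_congr rfl fun t _ => ?_
    rw [hcount, nsmul_eq_mul]
    push_cast
    ring
  refine ⟨hmain, fun hr1 => ?_, fun hr2 => ?_⟩
  · subst hr1
    have hNq : N / q = Q := by
      rw [hNQR, mul_one, add_comm, Nat.add_mul_div_right _ _ (by omega),
        Nat.div_eq_of_lt (by simpa using hRlt), zero_add]
    simp [hmain, cq_one, hNq]
  · simp only [hmain, mul_add, sum_add_distrib, ← sum_mul, sum_Icc_cq_eq_zero hr2, zero_mul,
      zero_add]

/-- the exact evaluation of `S_N(q,k;r)` for `gcd(q,r)=1` via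
the Chinese remainder theorem. -/
theorem stmt16 (q r N : ℕ) (hq : 1 ≤ q) (hr : 1 ≤ r) (hN : 1 ≤ N)
    (hqr : Nat.Coprime q r) (k : ℤ) (q' r' : ℕ)
    (hr' : r * r' ≡ 1 [MOD q]) (hq' : q * q' ≡ 1 [MOD r])
    (Q R : ℕ) (hNQR : N = Q * q * r + R) (hRlt : R < q * r)
    (ν : ℕ → ℕ)
    (hν1 : ∀ t : ℕ, (∃ n : ℤ, 1 ≤ n ∧ n ≤ (R : ℤ) ∧
      ((q : ℤ) * r) ∣ (n - (k * r' * r + t * q' * q))) → ν t = 1)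
    (hν0 : ∀ t : ℕ, ¬ (∃ n : ℤ, 1 ≤ n ∧ n ≤ (R : ℤ) ∧
      ((q : ℤ) * r) ∣ (n - (k * r' * r + t * q' * q))) → ν t = 0) :
    SN N q k r = ∑ t ∈ Finset.Icc 1 r, cq r (t : ℤ) * ((Q : ℂ) + (ν t : ℂ)) ∧
    (r = 1 → SN N q k r = ((N / q : ℕ) : ℂ) + (ν 1 : ℂ)) ∧
    (2 ≤ r → SN N q k r = ∑ t ∈ Finset.Icc 1 r, cq r (t : ℤ) * (ν t : ℂ)) :=
  stmt16_general q r N hq hr hqr k q' r' hr' hq' Q R hNQR hRlt ν hν1 hν0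
end

section
/- Let q, r ∈ ℕ with gcd(q, r) = 1 and r ≥ 2, and let k ∈ ℤ. Then for all N₁, N₂ ∈ ℕ with N₁ ≡ N₂ (mod q r) one has S_{N₁}(q,k;r) = S_{N₂}(q,k;r). -/
/-! The terms `n ≡ k (mod q)` in a window of `q r` consecutive integers are `n₀ + q t`, `t < r`.
For each `j` coprime to `r`, `exp (2πi j q / r)` is a primitive `r`-th root of unity (as `q` is
coprime to `r`), so `∑_{t<r} exp (2πi j (n₀ + q t) / r)` is a vanishing geometric sum. Hence every
window contributes `0` and `N ↦ S_N(q,k;r)` has period `q r`. -/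

open Finset

open Complex

theorem Finset.sum_range_mul_eq_sum_sum {M : Type*} [AddCommMonoid M] (g : ℕ → M) (q r : ℕ) :
    ∑ i ∈ range (q * r), g i = ∑ s ∈ range q, ∑ t ∈ range r, g (s + q * t) := by
  induction r with
  | zero => simp
  | succ r ih =>
    rw [mul_add_one, sum_range_add, ih]
    simp only [sum_range_succ, sum_add_distrib, add_comm (q * r)]

theorem sum_range_cq_add_mul_eq_zero {q r : ℕ} (hr : 1 < r) (hqr : q.Coprime r) (a : ℤ) :
    ∑ t ∈ range r, cq r (a + q * t) = 0 := by
  unfold cq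
  rw [sum_comm]
  refine sum_eq_zero fun j hj => ?_
  have hjq : (j * q).Coprime r := (mem_filter.mp hj).2.mul_left hqr
  have hζ := isPrimitiveRoot_exp_of_coprime (j * q) r (by omega) hjq
  have hterm : ∀ t : ℕ, exp (2 * Real.pi * I * j * ((a + q * t : ℤ) : ℂ) / r) =
      exp (2 * Real.pi * I * j * a / r) * exp (2 * Real.pi * I * ((j * q : ℕ) / r)) ^ t := by
    intro t
    rw [← exp_nat_mul, ← exp_add]
    push_cast
    ring_nf
  simp only [hterm, ← mul_sum, hζ.geom_sum_eq_zero hr, mul_zero]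

theorem SN_eq_sum_range (N q : ℕ) (k : ℤ) (r : ℕ) :
    SN N q k r = ∑ i ∈ range N, if ((i + 1 : ℕ) : ℤ) ≡ k [ZMOD q] then cq r (i + 1 : ℕ) else 0 := by
  rw [SN, sum_filter, ← Ico_add_one_right_eq_Icc, sum_Ico_eq_sum_range]
  simp only [add_tsub_cancel_right, add_comm 1]
  rfl

theorem SN_periodic {q r : ℕ} (hr : 1 < r) (hqr : q.Coprime r) (k : ℤ) :
    Function.Periodic (fun N => SN N q k r) (q * r) := by
  intro N
  dsimp only
  rw [SN_eq_sum_range, SN_eq_sum_range, sum_range_add, add_eq_left, sum_range_mul_eq_sum_sum]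
  -- the congruence condition only sees the residue `s` of the window index `s + q t`
  refine sum_eq_zero fun s _ => ?_
  have hshift : ∀ t : ℕ, ((N + (s + q * t) + 1 : ℕ) : ℤ) = (N + s + 1 : ℕ) + q * t := by
    intro t; push_cast; ring
  simp only [hshift, Int.ModEq, Int.add_mul_emod_self_left, sum_ite_irrel, sum_const_zero,
    sum_range_cq_add_mul_eq_zero hr hqr, ite_self]

theorem stmt17_general (q r : ℕ) (hr : 2 ≤ r) (hqr : Nat.Coprime q r) (k : ℤ)
    (N₁ N₂ : ℕ) (h : N₁ ≡ N₂ [MOD q * r]) :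
    SN N₁ q k r = SN N₂ q k r := by
  have hper := SN_periodic hr hqr k
  calc SN N₁ q k r = SN (N₁ % (q * r)) q k r := (hper.map_mod_nat N₁).symm
    _ = SN N₂ q k r := by rw [h]; exact hper.map_mod_nat N₂

/-- `S_N(q,k;r)` only depends on `N mod qr` (for `gcd(q,r)=1`, `r ≥ 2`). -/
theorem stmt17 (q r : ℕ) (hq : 1 ≤ q) (hr : 2 ≤ r) (hqr : Nat.Coprime q r) (k : ℤ)
    (N₁ N₂ : ℕ) (hN₁ : 1 ≤ N₁) (hN₂ : 1 ≤ N₂) (h : N₁ ≡ N₂ [MOD q * r]) :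
    SN N₁ q k r = SN N₂ q k r :=
  stmt17_general q r hr hqr k N₁ N₂ h
end

section
/- Let q, r ∈ ℕ with gcd(q, r) = 1, q ≥ 2 and r ≥ 2, and let k ∈ ℤ_q^* (i.e. 1 ≤ k ≤ q and gcd(k, q) = 1). Then ∑_{N=1}^{qr} S_N(q,k;r) = − ∑_{N=1}^{qr} S_N(q, q−k; r). -/
open Finset

/-!
Exchanging the order of summation writes `∑_{N ≤ qr} S_N(q,k;r)` as
`∑_{j<r} (qr + 1 - n_j) c_r(n_j)` with `n_j = k + qj`. Reflecting `j ↦ r - 1 - j` carries the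
class of `q - k` to `qr - n_j`, and `c_r` is even and `r`-periodic, so the two weighted sums add up
to `(qr + 2) ∑_{j<r} c_r(k + qj)`. Since `q` is a unit mod `r`, the exponentials `exp(2πi·iq/r)`
are primitive `r`-th roots of unity, and for `r ≥ 2` their geometric sums over a full period vanish.
-/

theorem cq_add_mul_self (r : ℕ) (n t : ℤ) : cq r (n + r * t) = cq r n := by
  rcases eq_or_ne r 0 with rfl | hr
  · simp
  refine sum_congr rfl fun j _ => ?_
  have hr' : (r : ℂ) ≠ 0 := Nat.cast_ne_zero.mpr hr
  rw [show 2 * Real.pi * Complex.I * j * ((n + r * t : ℤ) : ℂ) / r =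
      2 * Real.pi * Complex.I * j * n / r + (j * t : ℤ) * (2 * Real.pi * Complex.I) by
    push_cast; field_simp, Complex.exp_add, Complex.exp_int_mul_two_pi_mul_I, mul_one]

theorem cq_neg {r : ℕ} (hr : 1 < r) (n : ℤ) : cq r (-n) = cq r n := by
  have hr' : (r : ℂ) ≠ 0 := Nat.cast_ne_zero.mpr (by omega)
  have hlt : ∀ j ∈ (Icc 1 r).filter (·.Coprime r), j < r := fun j hj => by
    simp only [mem_filter, mem_Icc] at hj
    exact hj.1.2.lt_of_ne fun h => by rw [h, Nat.coprime_self] at hj; omega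
  have hmem : ∀ j ∈ (Icc 1 r).filter (·.Coprime r), r - j ∈ (Icc 1 r).filter (·.Coprime r) :=
    fun j hj => by
      have := hlt j hj
      simp only [mem_filter, mem_Icc] at hj ⊢
      exact ⟨by omega, (Nat.coprime_self_sub_left this.le).mpr hj.2⟩
  refine sum_nbij' (r - ·) (r - ·) hmem hmem (fun j hj => by have := hlt j hj; omega)
    (fun j hj => by have := hlt j hj; omega) fun j hj => ?_
  rw [Nat.cast_sub (hlt j hj).le, show 2 * Real.pi * Complex.I * j * ((-n : ℤ) : ℂ) / r =
      2 * Real.pi * Complex.I * ((r : ℂ) - j) * n / r +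
        ((-n : ℤ) : ℂ) * (2 * Real.pi * Complex.I) by
    push_cast; field_simp; ring, Complex.exp_add, Complex.exp_int_mul_two_pi_mul_I, mul_one]

theorem cq_mul_sub {r : ℕ} (hr : 1 < r) (t n : ℤ) : cq r (r * t - n) = cq r n := by
  rw [sub_eq_neg_add, cq_add_mul_self, cq_neg hr]

theorem sum_range_cq_add_mul {q r : ℕ} (hr : 1 < r) (hqr : q.Coprime r) (a : ℤ) :
    ∑ j ∈ range r, cq r (a + q * j) = 0 := by
  unfold cq
  rw [sum_comm]
  refine sum_eq_zero fun i hi => ?_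
  have hr' : (r : ℂ) ≠ 0 := Nat.cast_ne_zero.mpr (by omega)
  have hroot := Complex.isPrimitiveRoot_exp_of_coprime (i * q) r (by omega)
    (Nat.Coprime.mul_left (mem_filter.mp hi).2 hqr)
  calc ∑ j ∈ range r, Complex.exp (2 * Real.pi * Complex.I * i * ((a + q * j : ℤ) : ℂ) / r)
      = ∑ j ∈ range r, Complex.exp (2 * Real.pi * Complex.I * i * a / r) *
          Complex.exp (2 * Real.pi * Complex.I * ((i * q : ℕ) / r)) ^ j := by
        refine sum_congr rfl fun j _ => ?_
        rw [← Complex.exp_nat_mul, ← Complex.exp_add]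
        push_cast
        ring_nf
    _ = 0 := by rw [← mul_sum, hroot.geom_sum_eq_zero hr, mul_zero]

theorem sum_Icc_sum_Icc_filter {M : Type*} [AddCommMonoid M] (p : ℕ → Prop) [DecidablePred p]
    (f : ℕ → M) (L : ℕ) :
    ∑ N ∈ Icc 1 L, ∑ n ∈ (Icc 1 N).filter p, f n =
      ∑ n ∈ (Icc 1 L).filter p, (L + 1 - n) • f n := by
  rw [sum_comm' (t' := (Icc 1 L).filter p) (s' := fun n => Icc n L)]
  · simp only [sum_const, Nat.card_Icc]
  · intro N n
    simp only [mem_Icc, mem_filter]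
    constructor <;> rintro ⟨h₁, h₂, h₃⟩ <;> refine ⟨?_, ?_, ?_⟩ <;> omega

theorem sum_Icc_filter_emod_eq_sum_range {M : Type*} [AddCommMonoid M] (f : ℕ → M) {q k : ℕ}
    (hk : 1 ≤ k) (hkq : k ≤ q) (r : ℕ) :
    ∑ n ∈ (Icc 1 (q * r)).filter (fun n : ℕ => (n : ℤ) % q = (k : ℤ) % q), f n =
      ∑ j ∈ range r, f (k + q * j) := by
  have hinj : Set.InjOn (fun j => k + q * j) (range r) := fun a _ b _ h => by
    simpa [show q ≠ 0 by omega] using h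
  rw [← sum_image hinj]
  congr 1
  ext n
  simp only [mem_filter, mem_Icc, mem_image, mem_range]
  constructor
  · rintro ⟨⟨hn, hnr⟩, hmod⟩
    obtain ⟨t, ht⟩ : (q : ℤ) ∣ n - k := Int.ModEq.dvd hmod.symm
    have ht0 : 0 ≤ t := by nlinarith
    lift t to ℕ using ht0
    refine ⟨t, ?_, ?_⟩
    · have : (t : ℤ) < r := by nlinarith
      exact_mod_cast this
    · have : (k : ℤ) + q * t = n := by linarith
      exact_mod_cast this
  · rintro ⟨j, hj, rfl⟩
    refine ⟨⟨by omega, by nlinarith⟩, ?_⟩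
    push_cast
    rw [Int.add_mul_emod_self_left]

theorem sum_Icc_SN_eq_sum_range {q r k : ℕ} (hk : 1 ≤ k) (hkq : k ≤ q) :
    ∑ N ∈ Icc 1 (q * r), SN N q k r =
      ∑ j ∈ range r, ((q * r + 1 : ℂ) - (k + q * j)) * cq r (k + q * j) := by
  simp only [SN]
  rw [sum_Icc_sum_Icc_filter, sum_Icc_filter_emod_eq_sum_range _ hk hkq]
  refine sum_congr rfl fun j hj => ?_
  have : k + q * j ≤ q * r + 1 := by have := mem_range.mp hj; nlinarith
  rw [nsmul_eq_mul, Nat.cast_sub this]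
  push_cast
  ring

/-- for coprime `q, r ≥ 2` and `k ∈ ℤ_q^*`,
`∑_{N=1}^{qr} S_N(q,k;r) = -∑_{N=1}^{qr} S_N(q,q-k;r)`. -/
theorem stmt18 (q r : ℕ) (hq : 2 ≤ q) (hr : 2 ≤ r) (hqr : Nat.Coprime q r)
    (k : ℕ) (hk : k ∈ Zstar q) :
    ∑ N ∈ Finset.Icc 1 (q * r), SN N q (k : ℤ) r =
      - ∑ N ∈ Finset.Icc 1 (q * r), SN N q ((q : ℤ) - (k : ℤ)) r := by
  obtain ⟨⟨hk1, hkq⟩, hkcop⟩ : (1 ≤ k ∧ k ≤ q) ∧ k.Coprime q := by simpa [Zstar] using hk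
  have hk_lt : k < q := hkq.lt_of_ne fun h => by rw [h, Nat.coprime_self] at hkcop; omega
  rw [show (q : ℤ) - k = ((q - k : ℕ) : ℤ) by omega, sum_Icc_SN_eq_sum_range hk1 hkq,
    sum_Icc_SN_eq_sum_range (by omega) (Nat.sub_le q k), ← sum_range_reflect,
    eq_neg_iff_add_eq_zero, ← sum_add_distrib]
  calc _ = ∑ j ∈ range r, (q * r + 2 : ℂ) * cq r ((q - k : ℕ) + q * j) :=
        sum_congr rfl fun j hj => ?_
    _ = 0 := by rw [← mul_sum, sum_range_cq_add_mul hr hqr, mul_zero]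
  have hj := mem_range.mp hj
  rw [show (k : ℤ) + q * ((r - 1 - j : ℕ) : ℤ) = r * q - ((q - k : ℕ) + q * j) by
    push_cast [hkq, show j ≤ r - 1 by omega, show 1 ≤ r by omega]; ring, cq_mul_sub hr]
  push_cast [hkq, show j ≤ r - 1 by omega, show 1 ≤ r by omega]
  ring
end
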